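/- arXiv:0911.1601 — 4 statements merged into one kernel-verified Lean document; each statement's English description precedes it below -/
import Mathlib

section
/- Let λ be a C¹ probability density on ℝ with λ(z) > 0 for all z, λ(z) → 0 as |z| → ∞, and λ' bounded; let Λ be the corresponding CDF. Then for every ε > 0 there is a constant C_ε > 0 such that for all x, y ∈ ℝ, |λ(x) − λ(y)| ≤ C_ε |Λ(x) − Λ(y)| + ε/4. -/
/-!
A density `λ` that is continuous and vanishes at infinity is uniformly continuous, bounded, and
below `ε / 4` off some compact set `K`. So `|λ x - λ y| ≤ ε / 4` unless `x` and `y` are at least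
some `L` apart and one of them lies in `K`. In that case the segment between them contains an
interval of length `L` inside the `L`-thickening of `K`, on which `λ ≥ δ > 0` by compactness;
hence `|Λ x - Λ y| ≥ δ L`, while `|λ x - λ y| ≤ max λ`.
-/

open MeasureTheory ProbabilityTheory Filter Set Real Pointwise

open Metric Topology

lemma sub_eq_intervalIntegral_of_eq_integral_Iic {f F : ℝ → ℝ} (hf : Integrable f)
    (hF : ∀ x, F x = ∫ z in Iic x, f z) (x y : ℝ) : F y - F x = ∫ z in x..y, f z := by
  rw [hF, hF, intervalIntegral.integral_Iic_sub_Iic hf.integrableOn hf.integrableOn]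

lemma mul_le_intervalIntegral_of_le_on_Icc {f : ℝ → ℝ} {x y u δ L : ℝ} (hf0 : ∀ z, 0 ≤ f z)
    (hf : Integrable f) (hL : 0 ≤ L) (hxu : x ≤ u) (huy : u + L ≤ y)
    (hδ : ∀ z ∈ Icc u (u + L), δ ≤ f z) : δ * L ≤ ∫ z in x..y, f z :=
  calc δ * L = ∫ _ in u..u + L, δ := by simp [mul_comm]
    _ ≤ ∫ z in u..u + L, f z :=
      intervalIntegral.integral_mono_on (by linarith) intervalIntegrable_const
        hf.intervalIntegrable hδ
    _ ≤ ∫ z in x..y, f z :=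
      intervalIntegral.integral_mono_interval hxu (by linarith) huy (ae_of_all _ hf0)
        hf.intervalIntegrable

lemma mul_le_intervalIntegral_of_mem {f : ℝ → ℝ} {K : Set ℝ} {x y δ L : ℝ}
    (hf0 : ∀ z, 0 ≤ f z) (hf : Integrable f) (hL : 0 ≤ L)
    (hδ : ∀ z ∈ cthickening L K, δ ≤ f z) (hLxy : L ≤ y - x) (hK : x ∈ K ∨ y ∈ K) :
    δ * L ≤ ∫ z in x..y, f z := by
  rcases hK with hx | hy
  · refine mul_le_intervalIntegral_of_le_on_Icc hf0 hf hL le_rfl (by linarith) fun z hz ↦ ?_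
    refine hδ z (closedBall_subset_cthickening hx L ?_)
    rw [Real.closedBall_eq_Icc]
    exact Icc_subset_Icc (by linarith) le_rfl hz
  · refine mul_le_intervalIntegral_of_le_on_Icc (u := y - L) hf0 hf hL (by linarith)
      (by linarith) fun z hz ↦ ?_
    refine hδ z (closedBall_subset_cthickening hy L ?_)
    rw [Real.closedBall_eq_Icc]
    exact Icc_subset_Icc (by linarith) (by linarith) hz

theorem exists_abs_sub_le_mul_abs_sub_primitive_add {f F : ℝ → ℝ} (hf : Continuous f)
    (hpos : ∀ z, 0 < f z) (hint : Integrable f) (hlim : Tendsto f (cocompact ℝ) (𝓝 0))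
    (hF : ∀ x, F x = ∫ z in Iic x, f z) {η : ℝ} (hη : 0 < η) :
    ∃ C > 0, ∀ x y, |f x - f y| ≤ C * |F x - F y| + η := by
  obtain ⟨L, hL, hnear⟩ :=
    Metric.uniformContinuous_iff.1 (hf.uniformContinuous_of_tendsto_cocompact hlim) η hη
  obtain ⟨K, hK, hfar⟩ := mem_cocompact.1 (hlim.eventually (gt_mem_nhds hη))
  obtain ⟨δ, hδ, hδf⟩ :=
    (hK.cthickening (r := L)).exists_forall_le' hf.continuousOn fun z _ ↦ hpos z
  obtain ⟨m, hm⟩ := hf.exists_forall_ge' 0 (hlim.eventually (ge_mem_nhds (hpos 0)))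
  have hC : 0 < f m / (δ * L) := by have := hpos m; positivity
  refine ⟨f m / (δ * L), hC, fun x y ↦ ?_⟩
  wlog hxy : x ≤ y generalizing x y
  · simpa only [abs_sub_comm] using this y x (le_of_not_ge hxy)
  have hf0 : ∀ z, 0 ≤ f z := fun z ↦ (hpos z).le
  have hFxy : |F x - F y| = ∫ z in x..y, f z := by
    rw [abs_sub_comm, sub_eq_intervalIntegral_of_eq_integral_Iic hint hF,
      abs_of_nonneg (intervalIntegral.integral_nonneg hxy fun z _ ↦ hf0 z)]
  have hCF : 0 ≤ f m / (δ * L) * |F x - F y| := mul_nonneg hC.le (abs_nonneg _)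
  by_cases hxyL : y - x < L
  · have hdist : dist x y < L := by
      rwa [Real.dist_eq, abs_sub_comm, abs_of_nonneg (sub_nonneg.2 hxy)]
    have := hnear hdist
    rw [Real.dist_eq] at this
    linarith
  by_cases hxyK : x ∈ K ∨ y ∈ K
  · have hmass := mul_le_intervalIntegral_of_mem hf0 hint hL.le hδf (not_lt.1 hxyL) hxyK
    calc |f x - f y| ≤ f m := abs_sub_le_of_nonneg_of_le (hf0 x) (hm x) (hf0 y) (hm y)
      _ = f m / (δ * L) * (δ * L) := by field_simp
      _ ≤ f m / (δ * L) * |F x - F y| := by rw [hFxy]; gcongr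
      _ ≤ _ := le_add_of_nonneg_right hη.le
  · rw [not_or] at hxyK
    have := abs_sub_lt_of_nonneg_of_lt (hf0 x) (hfar hxyK.1) (hf0 y) (hfar hxyK.2)
    linarith

theorem stmt2_general (lam : ℝ → ℝ) (hC1 : ContDiff ℝ 1 lam) (hpos : ∀ z, 0 < lam z)
    (hint : ∫ x, lam x = 1)
    (hlim : Tendsto lam (cocompact ℝ) (nhds 0))
    (Lam : ℝ → ℝ) (hLam : ∀ x, Lam x = ∫ z in Iic x, lam z)
    (ε : ℝ) (hε : 0 < ε) :
    ∃ C > 0, ∀ x y : ℝ, |lam x - lam y| ≤ C * |Lam x - Lam y| + ε / 4 := by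
  have hInt : Integrable lam := Integrable.of_integral_ne_zero (by rw [hint]; exact one_ne_zero)
  exact exists_abs_sub_le_mul_abs_sub_primitive_add hC1.continuous hpos hInt hlim hLam
    (by positivity)

theorem stmt2 (lam : ℝ → ℝ) (hC1 : ContDiff ℝ 1 lam) (hpos : ∀ z, 0 < lam z)
    (hint : ∫ x, lam x = 1)
    (hlim : Tendsto lam (cocompact ℝ) (nhds 0))
    (hbdd : ∃ M, ∀ x, |deriv lam x| ≤ M)
    (Lam : ℝ → ℝ) (hLam : ∀ x, Lam x = ∫ z in Iic x, lam z)
    (ε : ℝ) (hε : 0 < ε) :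
    ∃ C > 0, ∀ x y : ℝ, |lam x - lam y| ≤ C * |Lam x - Lam y| + ε / 4 :=
  stmt2_general lam hC1 hpos hint hlim Lam hLam ε hε
end

section
/- Let ν be a probability measure on ℝ with C¹ density λ satisfying λ > 0 everywhere, λ(z) → 0 as |z| → ∞, and λ' bounded. Then for every monotone set A ⊆ ℝⁿ, the boundary measure under uniform enlargement equals the sum of geometric influences: lim_{r↓0} (ν^{⊗n}(A + [-r,r]ⁿ) − ν^{⊗n}(A))/r = Σ_{i=1}^n I_i^G(A). -/
open MeasureTheory ProbabilityTheory Filter Set Real Pointwise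

/-- Lower Minkowski content of a set `A ⊆ ℝ` w.r.t. a measure `ν`. -/
noncomputable def mink (ν : Measure ℝ) (A : Set ℝ) : ℝ :=
  liminf (fun r : ℝ => ((ν (A + Icc (-r) r)).toReal - (ν A).toReal) / r)
    (nhdsWithin 0 (Ioi 0))

/-- The fiber of `A` along coordinate `i` through `x`. -/
def fiber {n : ℕ} (A : Set (Fin n → ℝ)) (i : Fin n) (x : Fin n → ℝ) : Set ℝ :=
  {y | Function.update x i y ∈ A}

/-- Geometric influence of coordinate `i` on `A` w.r.t. the product measure `ν^⊗n`. -/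
noncomputable def geomInfl (n : ℕ) (ν : Measure ℝ) (A : Set (Fin n → ℝ)) (i : Fin n) : ℝ :=
  ∫ x, mink ν (fiber A i x) ∂(Measure.pi fun _ : Fin n => ν)

/-- h-influence of coordinate `i` on `A`. -/
noncomputable def hInfl (n : ℕ) (ν : Measure ℝ) (h : ℝ → ℝ) (A : Set (Fin n → ℝ))
    (i : Fin n) : ℝ :=
  ∫ x, h ((ν (fiber A i x)).toReal) ∂(Measure.pi fun _ : Fin n => ν)

/-!
For an upper set `A`, the enlargement `A + [-r, r]ⁿ` is the translate `A - r𝟙`. Translating one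
coordinate at a time telescopes `ν^⊗n(A - r𝟙) - ν^⊗n(A)` into `n` terms, and by Fubini the `k`-th
term is the integral over `x` of `ν(F - r) - ν(F)`, where `F` is the `k`-th fiber of `A` through `x`
translated by `r` in the coordinates before `k`. Fibers are half-lines, so the one-dimensional
quotient is `r⁻¹ ∫_{a-r}^a λ`: it is bounded by `sup λ` and tends to `λ a = m_ν(F)`. Translating the
base point costs at most `sup λ · ‖λ(· - r) - λ‖₁` per coordinate, which tends to `0` by Scheffé's
lemma, and dominated convergence concludes. Decreasing sets reduce to increasing ones through
`x ↦ -x`, which maps `ν` to the measure with density `λ(-x)`.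
-/
open Topology ENNReal

theorem IsUpperSet.add_Icc_neg_eq_preimage_add {α : Type*} [AddCommGroup α] [PartialOrder α]
    [IsOrderedAddMonoid α] {s : Set α} (hs : IsUpperSet s) {c : α} (hc : 0 ≤ c) :
    s + Icc (-c) c = (· + c) ⁻¹' s := by
  ext x
  constructor
  · rintro ⟨a, ha, t, ⟨hct, -⟩, rfl⟩
    refine hs ?_ ha
    show a ≤ a + t + c
    rw [add_assoc]
    exact le_add_of_nonneg_right (neg_le_iff_add_nonneg.mp hct)
  · intro hx
    exact ⟨x + c, hx, -c, ⟨le_rfl, neg_le_self hc⟩, add_neg_cancel_right x c⟩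

theorem IsUpperSet.real_trichotomy {F : Set ℝ} (hF : IsUpperSet F) :
    F = ∅ ∨ F = univ ∨ ∃ a, Ioi a ⊆ F ∧ F ⊆ Ici a := by
  rcases F.eq_empty_or_nonempty with hempty | hne
  · exact Or.inl hempty
  by_cases hbdd : BddBelow F
  · refine Or.inr (Or.inr ⟨sInf F, fun x hx => ?_, fun x hx => csInf_le hbdd hx⟩)
    obtain ⟨y, hy, hyx⟩ := (csInf_lt_iff hbdd hne).1 hx
    exact hF hyx.le hy
  · refine Or.inr (Or.inl (eq_univ_of_forall fun x => ?_))
    obtain ⟨y, hy, hyx⟩ := not_bddBelow_iff.1 hbdd x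
    exact hF hyx.le hy

theorem IsUpperSet.measure_preimage_add_sub {ν : Measure ℝ} [NullSingletonClass ν]
    [IsFiniteMeasure ν] {F : Set ℝ} (hF : IsUpperSet F) :
    (∀ r, (ν ((· + r) ⁻¹' F)).toReal - (ν F).toReal = 0) ∨
      ∃ a, ∀ r, 0 ≤ r →
        (ν ((· + r) ⁻¹' F)).toReal - (ν F).toReal = (ν (Ioc (a - r) a)).toReal := by
  rcases hF.real_trichotomy with rfl | rfl | ⟨a, hIoi, hIci⟩
  · simp
  · simp
  right
  have squeeze : ∀ {G : Set ℝ} {b : ℝ}, Ioi b ⊆ G → G ⊆ Ici b → ν G = ν (Ioi b) := fun h₁ h₂ =>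
    le_antisymm ((measure_mono h₂).trans (measure_congr Ioi_ae_eq_Ici).ge) (measure_mono h₁)
  refine ⟨a, fun r hr => ?_⟩
  rw [squeeze hIoi hIci, squeeze (b := a - r) (by simpa using preimage_mono (f := (· + r)) hIoi)
    (by simpa using preimage_mono (f := (· + r)) hIci), ← Ioi_sdiff_Ioi,
    measure_sdiff (Ioi_subset_Ioi (by linarith)) measurableSet_Ioi.nullMeasurableSet
    (measure_ne_top ν _), ENNReal.toReal_sub_of_le (measure_mono (Ioi_subset_Ioi (by linarith)))
    (measure_ne_top ν _)]

theorem Continuous.tendsto_intervalIntegral_sub_div {f : ℝ → ℝ} (hf : Continuous f) (a : ℝ) :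
    Tendsto (fun r => (∫ t in (a - r)..a, f t) / r) (𝓝[>] 0) (𝓝 (f a)) := by
  have hderiv : HasDerivAt (fun r => ∫ t in (a - r)..a, f t) (f a) 0 := by
    have := (intervalIntegral.integral_hasDerivAt_left (hf.intervalIntegrable (a - 0) a)
      hf.stronglyMeasurable.stronglyMeasurableAtFilter hf.continuousAt).comp (0 : ℝ)
      ((hasDerivAt_id (0 : ℝ)).const_sub a)
    simpa [Function.comp_def] using this
  refine hderiv.tendsto_slope_zero_right.congr fun r => ?_
  simp [div_eq_inv_mul]

noncomputable def translateQuot (ν : Measure ℝ) (F : Set ℝ) (r : ℝ) : ℝ :=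
  ((ν ((· + r) ⁻¹' F)).toReal - (ν F).toReal) / r

theorem IsUpperSet.mink_eq_of_tendsto {ν : Measure ℝ} {F : Set ℝ} (hF : IsUpperSet F) {c : ℝ}
    (h : Tendsto (translateQuot ν F) (𝓝[>] 0) (𝓝 c)) : mink ν F = c := by
  refine (h.congr' ?_).liminf_eq
  filter_upwards [self_mem_nhdsWithin] with r hr
  rw [translateQuot, hF.add_Icc_neg_eq_preimage_add (le_of_lt hr)]

section Density

variable {ρ : ℝ → ℝ} {ν : Measure ℝ} {F : Set ℝ}

theorem measure_Ioc_toReal_of_eq_withDensity (h0 : ∀ x, 0 ≤ ρ x) (hI : Integrable ρ)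
    (hν : ν = volume.withDensity fun x => ENNReal.ofReal (ρ x)) {a b : ℝ} (hab : a ≤ b) :
    (ν (Ioc a b)).toReal = ∫ t in a..b, ρ t := by
  rw [hν, withDensity_apply _ measurableSet_Ioc,
    ← ofReal_integral_eq_lintegral_ofReal hI.restrict (Eventually.of_forall h0),
    ENNReal.toReal_ofReal (integral_nonneg h0), intervalIntegral.integral_of_le hab]

theorem IsUpperSet.translateQuot_eq (h0 : ∀ x, 0 ≤ ρ x) (hI : Integrable ρ)
    (hν : ν = volume.withDensity fun x => ENNReal.ofReal (ρ x)) (hF : IsUpperSet F) :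
    (∀ r, translateQuot ν F r = 0) ∨
      ∃ a, ∀ r, 0 < r → translateQuot ν F r = (∫ t in (a - r)..a, ρ t) / r := by
  have : IsFiniteMeasure ν := hν ▸ isFiniteMeasure_withDensity_ofReal hI.hasFiniteIntegral
  have : NullSingletonClass ν := by rw [hν]; infer_instance
  rcases hF.measure_preimage_add_sub (ν := ν) with hzero | ⟨a, ha⟩
  · exact Or.inl fun r => by rw [translateQuot, hzero, zero_div]
  · refine Or.inr ⟨a, fun r hr => ?_⟩
    rw [translateQuot, ha r hr.le,
      measure_Ioc_toReal_of_eq_withDensity h0 hI hν (by linarith)]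

theorem IsUpperSet.tendsto_translateQuot_mink (hc : Continuous ρ) (h0 : ∀ x, 0 ≤ ρ x)
    (hI : Integrable ρ) (hν : ν = volume.withDensity fun x => ENNReal.ofReal (ρ x))
    (hF : IsUpperSet F) : Tendsto (translateQuot ν F) (𝓝[>] 0) (𝓝 (mink ν F)) := by
  suffices ∃ c, Tendsto (translateQuot ν F) (𝓝[>] 0) (𝓝 c) by
    obtain ⟨c, hc⟩ := this
    rwa [hF.mink_eq_of_tendsto hc]
  rcases hF.translateQuot_eq h0 hI hν with hzero | ⟨a, ha⟩
  · exact ⟨0, by rw [funext hzero]; exact tendsto_const_nhds⟩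
  · refine ⟨ρ a, (hc.tendsto_intervalIntegral_sub_div a).congr' ?_⟩
    filter_upwards [self_mem_nhdsWithin] with r hr
    exact (ha r hr).symm

theorem IsUpperSet.abs_translateQuot_le (h0 : ∀ x, 0 ≤ ρ x) (hI : Integrable ρ)
    (hν : ν = volume.withDensity fun x => ENNReal.ofReal (ρ x)) {L : ℝ} (hL : ∀ x, ρ x ≤ L)
    (hF : IsUpperSet F) {r : ℝ} (hr : 0 < r) : |translateQuot ν F r| ≤ L := by
  rcases hF.translateQuot_eq h0 hI hν with hzero | ⟨a, ha⟩
  · simpa [hzero] using (h0 0).trans (hL 0)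
  · rw [ha r hr, abs_div, abs_of_pos hr, div_le_iff₀ hr]
    have := intervalIntegral.norm_integral_le_of_norm_le_const (a := a - r) (b := a) (C := L)
      (f := ρ) fun x _ => by rw [Real.norm_eq_abs, abs_of_nonneg (h0 x)]; exact hL x
    simpa [abs_of_pos hr] using this

end Density

theorem tendsto_integral_abs_sub_of_integral_eq {α ι : Type*} [MeasurableSpace α]
    {μ : Measure α} {l : Filter ι} [l.IsCountablyGenerated] {f : α → ℝ} {F : ι → α → ℝ}
    (hf : Integrable f μ) (hF : ∀ i, Integrable (F i) μ) (hF0 : ∀ i x, 0 ≤ F i x)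
    (hlim : ∀ x, Tendsto (fun i => F i x) l (𝓝 (f x)))
    (hint : ∀ i, ∫ x, F i x ∂μ = ∫ x, f x ∂μ) :
    Tendsto (fun i => ∫ x, |F i x - f x| ∂μ) l (𝓝 0) := by
  rcases l.eq_or_neBot with rfl | _
  · exact tendsto_bot
  have hf0 : ∀ x, 0 ≤ f x := fun x => ge_of_tendsto' (hlim x) fun i => hF0 i x
  have hpos : ∀ i, Integrable (fun x => max (f x - F i x) 0) μ :=
    fun i => (hf.sub (hF i)).pos_part
  -- the positive and negative parts of `F i - f` have the same integral
  have habs : ∀ i, ∫ x, |F i x - f x| ∂μ = 2 * ∫ x, max (f x - F i x) 0 ∂μ := fun i => by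
    have hpt : ∀ x, |F i x - f x| = (F i x - f x) + 2 * max (f x - F i x) 0 := fun x => by
      rcases le_total (F i x) (f x) with h | h
      · rw [abs_of_nonpos (by linarith), max_eq_left (by linarith)]; ring
      · rw [abs_of_nonneg (by linarith), max_eq_right (by linarith)]; ring
    rw [integral_congr_ae (Eventually.of_forall hpt),
      integral_add (f := fun x => F i x - f x) ((hF i).sub hf) ((hpos i).const_mul 2),
      integral_sub (hF i) hf, hint i, sub_self, zero_add, integral_const_mul]
  have hlim_pos : Tendsto (fun i => ∫ x, max (f x - F i x) 0 ∂μ) l (𝓝 (∫ _, (0 : ℝ) ∂μ)) :=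
    tendsto_integral_filter_of_dominated_convergence f
      (Eventually.of_forall fun i => (hpos i).aestronglyMeasurable)
      (Eventually.of_forall fun i => Eventually.of_forall fun x => by
        rw [Real.norm_eq_abs, abs_of_nonneg (le_max_right _ _)]
        exact max_le (by linarith [hF0 i x]) (hf0 x))
      hf (Eventually.of_forall fun x => by
        simpa using ((tendsto_const_nhds.sub (hlim x)).max tendsto_const_nhds :
          Tendsto (fun i => max (f x - F i x) 0) l (𝓝 (max (f x - f x) 0))))
  simpa [habs] using hlim_pos.const_mul 2

theorem Continuous.tendsto_integral_abs_comp_sub_sub {ρ : ℝ → ℝ} (hc : Continuous ρ)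
    (h0 : ∀ x, 0 ≤ ρ x) (hI : Integrable ρ) :
    Tendsto (fun s => ∫ t, |ρ (t - s) - ρ t|) (𝓝 0) (𝓝 0) :=
  tendsto_integral_abs_sub_of_integral_eq hI (fun s => hI.comp_sub_right s) (fun _ _ => h0 _)
    (fun t => (hc.tendsto t).comp ((continuous_sub_left t).tendsto' 0 t (sub_zero t)))
    (fun s => integral_sub_right_eq_self ρ s)

section Resample

variable {ι : Type*} [Fintype ι] [DecidableEq ι] {X : ι → Type*} [∀ i, MeasurableSpace (X i)]

theorem measurePreserving_update (μ : ∀ i, Measure (X i)) [∀ i, IsProbabilityMeasure (μ i)]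
    (i : ι) :
    MeasurePreserving (fun p : (∀ j, X j) × X i => Function.update p.1 i p.2)
      ((Measure.pi μ).prod (μ i)) (Measure.pi μ) := by
  refine ⟨measurable_update', (Measure.pi_eq fun s hs => ?_).symm⟩
  have hbox : (fun p : (∀ j, X j) × X i => Function.update p.1 i p.2) ⁻¹' univ.pi s
      = univ.pi (Function.update s i univ) ×ˢ s i := by
    ext ⟨x, y⟩
    simp only [mem_preimage, mem_prod, mem_univ_pi]
    constructor
    · intro h
      refine ⟨fun j => ?_, by simpa using h i⟩
      rcases eq_or_ne j i with rfl | hj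
      · simp
      · simpa [hj] using h j
    · rintro ⟨h, hy⟩ j
      rcases eq_or_ne j i with rfl | hj
      · simpa using hy
      · simpa [hj] using h j
  rw [Measure.map_apply measurable_update' (MeasurableSet.univ_pi hs), hbox,
    Measure.prod_prod, Measure.pi_pi, ← Finset.prod_erase_mul _ _ (Finset.mem_univ i),
    Function.update_self, measure_univ, mul_one,
    ← Finset.prod_erase_mul _ _ (Finset.mem_univ i)]
  congr 1
  refine Finset.prod_congr rfl fun j hj => ?_
  rw [Function.update_of_ne (Finset.ne_of_mem_erase hj)]

variable (μ : ∀ i, Measure (X i)) [∀ i, IsProbabilityMeasure (μ i)] (i : ι)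

theorem measure_pi_eq_lintegral_update {S : Set (∀ j, X j)} (hS : MeasurableSet S) :
    Measure.pi μ S = ∫⁻ x, μ i {y | Function.update x i y ∈ S} ∂Measure.pi μ := by
  rw [← (measurePreserving_update μ i).measure_preimage hS.nullMeasurableSet,
    Measure.prod_apply (measurable_update' hS)]
  rfl

theorem measure_pi_toReal_eq_integral_update {S : Set (∀ j, X j)} (hS : MeasurableSet S) :
    (Measure.pi μ S).toReal
      = ∫ x, (μ i {y | Function.update x i y ∈ S}).toReal ∂Measure.pi μ := by
  rw [measure_pi_eq_lintegral_update μ i hS]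
  exact (integral_toReal (measurable_measure_prodMk_left (measurable_update' hS)).aemeasurable
    (Eventually.of_forall fun _ => measure_lt_top _ _)).symm

theorem integral_pi_eq_integral_integral_update {E : Type*} [NormedAddCommGroup E]
    [NormedSpace ℝ E] {f : (∀ j, X j) → E} (hf : Integrable f (Measure.pi μ)) :
    ∫ x, f x ∂Measure.pi μ = ∫ x, ∫ y, f (Function.update x i y) ∂μ i ∂Measure.pi μ := by
  have hU := measurePreserving_update μ i
  rw [← hU.map_eq] at hf
  conv_lhs => rw [← hU.map_eq, integral_map hU.measurable.aemeasurable hf.aestronglyMeasurable]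
  exact integral_prod _ (hf.comp_measurable hU.measurable)

end Resample

section Translation

variable {ρ : ℝ → ℝ} {ν : Measure ℝ} {C : ℝ}

theorem abs_integral_comp_add_sub_le (h0 : ∀ x, 0 ≤ ρ x) (hI : Integrable ρ)
    (hν : ν = volume.withDensity fun x => ENNReal.ofReal (ρ x)) {g : ℝ → ℝ}
    (hg : Measurable g) (hgC : ∀ y, |g y| ≤ C) (s : ℝ) :
    |∫ y, (g (y + s) - g y) ∂ν| ≤ C * ∫ t, |ρ (t - s) - ρ t| := by
  have hgC' : ∀ᵐ y ∂volume, ‖g y‖ ≤ C := Eventually.of_forall hgC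
  have hdensity : ∀ f : ℝ → ℝ, ∫ y, f y ∂ν = ∫ y, ρ y * f y := fun f => by
    rw [hν, integral_withDensity_eq_integral_toReal_smul₀ hI.aemeasurable.ennreal_ofReal
      (Eventually.of_forall fun _ => ENNReal.ofReal_lt_top)]
    simp only [ENNReal.toReal_ofReal (h0 _), smul_eq_mul]
  have hshift : ∫ y, ρ y * g (y + s) = ∫ u, ρ (u - s) * g u := by
    simpa using integral_add_right_eq_self (μ := volume) (fun u => ρ (u - s) * g u) s
  have hI₁ : Integrable fun u => ρ (u - s) * g u :=
    (hI.comp_sub_right s).mul_bdd hg.aestronglyMeasurable hgC'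
  have hI₂ : Integrable fun u => ρ u * g u := hI.mul_bdd hg.aestronglyMeasurable hgC'
  have hI₀ : Integrable fun u => ρ u * g (u + s) :=
    hI.mul_bdd (hg.comp (measurable_add_const s)).aestronglyMeasurable
      (Eventually.of_forall fun _ => hgC _)
  calc |∫ y, (g (y + s) - g y) ∂ν|
      = |∫ u, (ρ (u - s) - ρ u) * g u| := by
        rw [hdensity, integral_congr_ae (Eventually.of_forall fun y => mul_sub (ρ y) _ _),
          integral_sub hI₀ hI₂, hshift, ← integral_sub hI₁ hI₂]
        simp only [sub_mul]
    _ ≤ ∫ u, C * |ρ (u - s) - ρ u| := by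
        refine norm_integral_le_of_norm_le (f := fun u => (ρ (u - s) - ρ u) * g u)
          (g := fun u => C * |ρ (u - s) - ρ u|)
          (((hI.comp_sub_right s).sub hI).abs.const_mul C) (Eventually.of_forall fun u => ?_)
        rw [Real.norm_eq_abs, abs_mul, mul_comm]
        exact mul_le_mul_of_nonneg_right (hgC u) (abs_nonneg _)
    _ = C * ∫ t, |ρ (t - s) - ρ t| := integral_const_mul C _

end Translation

theorem integrable_comp_add_sub {G : Type*} [MeasurableSpace G] [Add G] [MeasurableAdd G]
    {μ : Measure G} [IsFiniteMeasure μ] {g : G → ℝ} {C : ℝ} (hg : Measurable g)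
    (hgC : ∀ x, |g x| ≤ C) (v : G) : Integrable (fun x => g (x + v) - g x) μ :=
  Integrable.of_bound ((hg.comp (measurable_add_const v)).sub hg).aestronglyMeasurable (C + C)
    (Eventually.of_forall fun _ => (norm_sub_le _ _).trans (add_le_add (hgC _) (hgC _)))

section PiTranslation

variable {ι : Type*} [Fintype ι] [DecidableEq ι] {ρ : ℝ → ℝ} {ν : Measure ℝ}
  [IsProbabilityMeasure ν] {C : ℝ}

theorem abs_integral_pi_comp_add_single_sub_le (h0 : ∀ x, 0 ≤ ρ x) (hI : Integrable ρ)
    (hν : ν = volume.withDensity fun x => ENNReal.ofReal (ρ x)) {g : (ι → ℝ) → ℝ}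
    (hg : Measurable g) (hgC : ∀ x, |g x| ≤ C) (i : ι) (s : ℝ) :
    |∫ x, (g (x + Pi.single i s) - g x) ∂Measure.pi fun _ => ν|
      ≤ C * ∫ t, |ρ (t - s) - ρ t| := by
  rw [integral_pi_eq_integral_integral_update _ i (integrable_comp_add_sub hg hgC _)]
  have hupdate : ∀ (x : ι → ℝ) (y : ℝ),
      Function.update x i y + Pi.single i s = Function.update x i (y + s) := fun x y => by
    rw [Pi.single, ← Function.update_add, add_zero]
  have hfiber : ∀ x : ι → ℝ,
      ‖∫ y, (g (Function.update x i y + Pi.single i s) - g (Function.update x i y)) ∂ν‖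
        ≤ C * ∫ t, |ρ (t - s) - ρ t| := fun x => by
    simp only [hupdate]
    exact abs_integral_comp_add_sub_le h0 hI hν (hg.comp (measurable_update x))
      (fun _ => hgC _) s
  simpa using norm_integral_le_of_norm_le_const (μ := Measure.pi fun _ : ι => ν)
    (Eventually.of_forall hfiber)

theorem abs_integral_pi_comp_add_sub_le (h0 : ∀ x, 0 ≤ ρ x) (hI : Integrable ρ)
    (hν : ν = volume.withDensity fun x => ENNReal.ofReal (ρ x)) {g : (ι → ℝ) → ℝ}
    (hg : Measurable g) (hgC : ∀ x, |g x| ≤ C) (v : ι → ℝ) :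
    |∫ x, (g (x + v) - g x) ∂Measure.pi fun _ => ν|
      ≤ C * ∑ j, ∫ t, |ρ (t - v j) - ρ t| := by
  suffices ∀ (T : Finset ι) (g : (ι → ℝ) → ℝ), Measurable g → (∀ x, |g x| ≤ C) →
      |∫ x, (g (x + ∑ j ∈ T, Pi.single j (v j)) - g x) ∂Measure.pi fun _ => ν|
        ≤ C * ∑ j ∈ T, ∫ t, |ρ (t - v j) - ρ t| by
    simpa [Finset.univ_sum_single] using this Finset.univ g hg hgC
  intro T
  induction T using Finset.induction_on with
  | empty => intro g _ _; simp
  | insert j T hj ih =>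
    intro g hg hgC
    set w := ∑ k ∈ T, Pi.single k (v k)
    have hgw : Measurable fun x => g (x + w) := hg.comp (measurable_add_const w)
    have hsplit : ∀ x, g (x + (Pi.single j (v j) + w)) - g x
        = (g (x + Pi.single j (v j) + w) - g (x + w)) + (g (x + w) - g x) := fun x => by
      rw [add_assoc]; ring
    rw [Finset.sum_insert hj, Finset.sum_insert hj, mul_add,
      integral_congr_ae (Eventually.of_forall hsplit),
      integral_add (integrable_comp_add_sub hgw (fun _ => hgC _) _)
        (integrable_comp_add_sub hg hgC w)]
    exact (abs_add_le _ _).trans (add_le_add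
      (abs_integral_pi_comp_add_single_sub_le h0 hI hν hgw (fun _ => hgC _) j (v j))
      (ih g hg hgC))

end PiTranslation

theorem fiber_preimage_add_update {n : ℕ} (A : Set (Fin n → ℝ)) (i : Fin n) (x v : Fin n → ℝ)
    (c : ℝ) : fiber ((· + Function.update v i c) ⁻¹' A) i x = (· + c) ⁻¹' fiber A i (x + v) := by
  ext y
  change Function.update x i y + Function.update v i c ∈ A
    ↔ Function.update (x + v) i (y + c) ∈ A
  rw [Function.update_add]

section Fiber

variable {n : ℕ} {A : Set (Fin n → ℝ)}

theorem IsUpperSet.fiber (hA : IsUpperSet A) (i : Fin n) (x : Fin n → ℝ) :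
    IsUpperSet (fiber A i x) :=
  hA.preimage Function.update_mono

theorem measurable_measure_fiber (ν : Measure ℝ) [SFinite ν] (hA : MeasurableSet A)
    (i : Fin n) : Measurable fun x => ν (fiber A i x) :=
  measurable_measure_prodMk_left (measurable_update' hA)

theorem measurable_translateQuot_fiber (ν : Measure ℝ) [SFinite ν] (hA : MeasurableSet A)
    (i : Fin n) (r : ℝ) : Measurable fun x => translateQuot ν (fiber A i x) r := by
  have hshift : ∀ x, (· + r) ⁻¹' fiber A i x
      = fiber ((· + Function.update (0 : Fin n → ℝ) i r) ⁻¹' A) i x := fun x => by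
    simpa using (fiber_preimage_add_update A i x 0 r).symm
  simp only [translateQuot, hshift]
  exact ((measurable_measure_fiber ν (hA.preimage (measurable_add_const _)) i).ennreal_toReal
    |>.sub (measurable_measure_fiber ν hA i).ennreal_toReal).div_const r

variable {ν : Measure ℝ} [IsProbabilityMeasure ν]

theorem measure_pi_toReal_eq_integral_fiber (hA : MeasurableSet A) (i : Fin n) :
    ((Measure.pi fun _ : Fin n => ν) A).toReal
      = ∫ x, (ν (fiber A i x)).toReal ∂Measure.pi fun _ => ν :=
  measure_pi_toReal_eq_integral_update _ i hA

theorem integrable_measure_fiber_toReal (hA : MeasurableSet A) (i : Fin n) :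
    Integrable (fun x => (ν (fiber A i x)).toReal) (Measure.pi fun _ : Fin n => ν) :=
  Integrable.of_bound (measurable_measure_fiber ν hA i).ennreal_toReal.aestronglyMeasurable 1
    (Eventually.of_forall fun _ => by
      rw [Real.norm_eq_abs, abs_of_nonneg ENNReal.toReal_nonneg]; exact measureReal_le_one)

theorem measure_pi_preimage_add_update_sub (hA : MeasurableSet A) {i : Fin n} {v : Fin n → ℝ}
    (hv : v i = 0) {c : ℝ} (hc : c ≠ 0) :
    ((Measure.pi fun _ : Fin n => ν) ((· + Function.update v i c) ⁻¹' A)).toReal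
        - ((Measure.pi fun _ : Fin n => ν) ((· + v) ⁻¹' A)).toReal
      = c * ∫ x, translateQuot ν (fiber A i (x + v)) c ∂Measure.pi fun _ => ν := by
  have hmeas : ∀ w : Fin n → ℝ, MeasurableSet ((· + w) ⁻¹' A) :=
    fun w => hA.preimage (measurable_add_const w)
  rw [measure_pi_toReal_eq_integral_fiber (hmeas _) i,
    measure_pi_toReal_eq_integral_fiber (hmeas _) i,
    ← integral_sub (integrable_measure_fiber_toReal (hmeas _) i)
      (integrable_measure_fiber_toReal (hmeas _) i), ← integral_const_mul]
  congr 1 with x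
  have hfiber := fiber_preimage_add_update A i x v 0
  rw [Function.update_eq_self_iff.2 hv.symm] at hfiber
  rw [fiber_preimage_add_update, hfiber, translateQuot, mul_div_cancel₀ _ hc]
  simp

end Fiber

def shiftBelow (n k : ℕ) (r : ℝ) : Fin n → ℝ := fun j => if (j : ℕ) < k then r else 0

theorem shiftBelow_zero (n : ℕ) (r : ℝ) : shiftBelow n 0 r = 0 := by
  funext j; simp [shiftBelow]

theorem shiftBelow_self (n : ℕ) (r : ℝ) : shiftBelow n n r = fun _ => r := by
  funext j; simp [shiftBelow, j.isLt]

theorem shiftBelow_apply_self {n : ℕ} (k : Fin n) (r : ℝ) : shiftBelow n k r k = 0 := by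
  simp [shiftBelow]

theorem shiftBelow_succ {n : ℕ} (k : Fin n) (r : ℝ) :
    shiftBelow n (k + 1) r = Function.update (shiftBelow n k r) k r := by
  funext j
  rcases eq_or_ne j k with rfl | hj
  · simp [shiftBelow]
  · have : (j : ℕ) ≠ k := Fin.val_ne_of_ne hj
    simp only [shiftBelow, Function.update_of_ne hj]
    split_ifs <;> first | rfl | omega

theorem tendsto_shiftBelow (n k : ℕ) : Tendsto (shiftBelow n k) (𝓝 0) (𝓝 0) :=
  tendsto_pi_nhds.2 fun j => by
    simp only [shiftBelow]
    split_ifs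
    exacts [tendsto_id, tendsto_const_nhds]

section Boundary

variable {n : ℕ} {ρ : ℝ → ℝ} {ν : Measure ℝ} [IsProbabilityMeasure ν] {L : ℝ}
  {A : Set (Fin n → ℝ)}

theorem measure_pi_add_cube_sub_div_eq_sum (hA : MeasurableSet A) (hup : IsUpperSet A) {r : ℝ}
    (hr : 0 < r) :
    (((Measure.pi fun _ : Fin n => ν) (A + (univ : Set (Fin n)).pi fun _ => Icc (-r) r)).toReal
        - ((Measure.pi fun _ : Fin n => ν) A).toReal) / r
      = ∑ k : Fin n, ∫ x, translateQuot ν (fiber A k (x + shiftBelow n k r)) r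
          ∂Measure.pi fun _ => ν := by
  set B : ℕ → Set (Fin n → ℝ) := fun k => (· + shiftBelow n k r) ⁻¹' A
  have hcube : A + (univ : Set (Fin n)).pi (fun _ => Icc (-r) r) = B n := by
    rw [pi_univ_Icc]
    change _ = (· + shiftBelow n n r) ⁻¹' A
    rw [shiftBelow_self]
    exact hup.add_Icc_neg_eq_preimage_add (c := fun _ => r) fun _ => hr.le
  have hB0 : B 0 = A := by simp [B, shiftBelow_zero]
  have hstep : ∀ k : Fin n, ((Measure.pi fun _ : Fin n => ν) (B (k + 1))).toReal
      - ((Measure.pi fun _ : Fin n => ν) (B k)).toReal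
      = r * ∫ x, translateQuot ν (fiber A k (x + shiftBelow n k r)) r ∂Measure.pi fun _ => ν :=
    fun k => by
      simp only [B, shiftBelow_succ]
      exact measure_pi_preimage_add_update_sub hA (shiftBelow_apply_self k r) hr.ne'
  conv_lhs => rw [hcube, ← hB0]
  rw [← Finset.sum_range_sub (fun k => ((Measure.pi fun _ => ν) (B k)).toReal),
    ← Fin.sum_univ_eq_sum_range, Finset.sum_div]
  exact Finset.sum_congr rfl fun k _ => by rw [hstep, mul_div_cancel_left₀ _ hr.ne']

theorem tendsto_integral_translateQuot_fiber (hc : Continuous ρ) (h0 : ∀ x, 0 ≤ ρ x)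
    (hI : Integrable ρ) (hν : ν = volume.withDensity fun x => ENNReal.ofReal (ρ x))
    (hL : ∀ x, ρ x ≤ L) (hA : MeasurableSet A) (hup : IsUpperSet A) (i : Fin n)
    {v : ℝ → Fin n → ℝ} (hv : Tendsto v (𝓝[>] 0) (𝓝 0)) :
    Tendsto (fun r => ∫ x, translateQuot ν (fiber A i (x + v r)) r ∂Measure.pi fun _ => ν)
      (𝓝[>] 0) (𝓝 (geomInfl n ν A i)) := by
  set μ := Measure.pi fun _ : Fin n => ν
  have hmeas := measurable_translateQuot_fiber ν hA i
  have hbound : ∀ r, 0 < r → ∀ x, |translateQuot ν (fiber A i x) r| ≤ L :=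
    fun r hr x => (hup.fiber i x).abs_translateQuot_le h0 hI hν hL hr
  have hunshifted : Tendsto (fun r => ∫ x, translateQuot ν (fiber A i x) r ∂μ) (𝓝[>] 0)
      (𝓝 (geomInfl n ν A i)) :=
    tendsto_integral_filter_of_dominated_convergence (fun _ => L)
      (Eventually.of_forall fun r => (hmeas r).aestronglyMeasurable)
      (eventually_mem_nhdsWithin.mono fun r hr => Eventually.of_forall (hbound r hr))
      (integrable_const L)
      (Eventually.of_forall fun x => (hup.fiber i x).tendsto_translateQuot_mink hc h0 hI hν)
  have hmodulus : Tendsto (fun r => L * ∑ j, ∫ t, |ρ (t - v r j) - ρ t|) (𝓝[>] 0) (𝓝 0) := by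
    simpa using (tendsto_finsetSum _ fun j _ => (hc.tendsto_integral_abs_comp_sub_sub h0 hI).comp
      ((continuous_apply j).continuousAt.tendsto.comp hv)).const_mul L
  have hshift : Tendsto (fun r => ∫ x, (translateQuot ν (fiber A i (x + v r)) r
      - translateQuot ν (fiber A i x) r) ∂μ) (𝓝[>] 0) (𝓝 0) := by
    refine squeeze_zero_norm' ?_ hmodulus
    filter_upwards [self_mem_nhdsWithin] with r hr
    exact abs_integral_pi_comp_add_sub_le h0 hI hν (hmeas r) (hbound r hr) (v r)
  simpa using (hshift.add hunshifted).congr' (by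
    filter_upwards [self_mem_nhdsWithin] with r hr
    rw [← integral_add (integrable_comp_add_sub (hmeas r) (hbound r hr) _)
      (Integrable.of_bound (hmeas r).aestronglyMeasurable L (Eventually.of_forall (hbound r hr)))]
    simp only [sub_add_cancel])

theorem tendsto_measure_pi_add_cube_sub_div_of_isUpperSet (hc : Continuous ρ)
    (h0 : ∀ x, 0 ≤ ρ x) (hI : Integrable ρ)
    (hν : ν = volume.withDensity fun x => ENNReal.ofReal (ρ x)) (hL : ∀ x, ρ x ≤ L)
    (hA : MeasurableSet A) (hup : IsUpperSet A) :
    Tendsto (fun r : ℝ =>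
      (((Measure.pi fun _ : Fin n => ν) (A + (univ : Set (Fin n)).pi fun _ => Icc (-r) r)).toReal
        - ((Measure.pi fun _ : Fin n => ν) A).toReal) / r)
      (𝓝[>] 0) (𝓝 (∑ i, geomInfl n ν A i)) := by
  refine (tendsto_finsetSum _ fun k _ => tendsto_integral_translateQuot_fiber hc h0 hI hν hL hA
    hup k ((tendsto_shiftBelow n k).mono_left nhdsWithin_le_nhds)).congr' ?_
  filter_upwards [self_mem_nhdsWithin] with r hr
  exact (measure_pi_add_cube_sub_div_eq_sum hA hup hr).symm

end Boundary

section Reflection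

theorem neg_add_Icc_neg_self {G : Type*} [AddCommGroup G] [PartialOrder G]
    [IsOrderedAddMonoid G] (s : Set G) (c : G) : -(s + Icc (-c) c) = -s + Icc (-c) c := by
  rw [neg_add, Set.neg_Icc, neg_neg]

theorem mink_neg (ν : Measure ℝ) (F : Set ℝ) : mink ν.neg (-F) = mink ν F := by
  simp only [mink, ← neg_add_Icc_neg_self, Measure.neg_apply, neg_neg]

theorem fiber_neg {n : ℕ} (A : Set (Fin n → ℝ)) (i : Fin n) (x : Fin n → ℝ) :
    fiber (-A) i x = -fiber A i (-x) := by
  ext y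
  change -Function.update x i y ∈ A ↔ Function.update (-x) i (-y) ∈ A
  rw [Function.update_neg]

theorem pi_neg {n : ℕ} (ν : Measure ℝ) [SigmaFinite ν] :
    Measure.pi (fun _ : Fin n => ν.neg) = (Measure.pi fun _ : Fin n => ν).neg :=
  (Measure.pi_map_pi (hμ := fun _ => inferInstanceAs (SigmaFinite ν.neg))
    fun _ => measurable_neg.aemeasurable).symm

theorem geomInfl_neg {n : ℕ} (ν : Measure ℝ) [SigmaFinite ν] (A : Set (Fin n → ℝ)) (i : Fin n) :
    geomInfl n ν.neg (-A) i = geomInfl n ν A i := by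
  rw [geomInfl, pi_neg, Measure.neg]
  refine (integral_map_equiv (MeasurableEquiv.neg _) _).trans ?_
  simp [fiber_neg, mink_neg, geomInfl]

theorem neg_withDensity (f : ℝ → ℝ≥0∞) :
    (volume.withDensity f).neg = volume.withDensity fun x => f (-x) := by
  ext s hs
  rw [Measure.neg_apply, withDensity_apply _ hs, withDensity_apply _ hs.neg]
  simpa using (Measure.measurePreserving_neg volume).setLIntegral_comp_preimage_emb
    (MeasurableEquiv.neg ℝ).measurableEmbedding (fun y => f (-y)) s

end Reflection

theorem stmt4_general (n : ℕ) (lam : ℝ → ℝ) (hC1 : ContDiff ℝ 1 lam) (hpos : ∀ z, 0 < lam z)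
    (hint : ∫ x, lam x = 1) (hlim : Tendsto lam (cocompact ℝ) (nhds 0))
    (ν : Measure ℝ) (hν : ν = volume.withDensity fun x => ENNReal.ofReal (lam x))
    (A : Set (Fin n → ℝ)) (hA : MeasurableSet A)
    (hmono : (∀ x ∈ A, ∀ y : Fin n → ℝ, (∀ i, x i ≤ y i) → y ∈ A) ∨
             (∀ x ∈ A, ∀ y : Fin n → ℝ, (∀ i, y i ≤ x i) → y ∈ A)) :
    Tendsto (fun r : ℝ =>
      (((Measure.pi fun _ : Fin n => ν) (A + (univ : Set (Fin n)).pi fun _ => Icc (-r) r)).toReal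
        - ((Measure.pi fun _ : Fin n => ν) A).toReal) / r)
      (nhdsWithin 0 (Ioi 0)) (nhds (∑ i, geomInfl n ν A i)) := by
  have hc : Continuous lam := hC1.continuous
  have h0 : ∀ x, 0 ≤ lam x := fun x => (hpos x).le
  have hI : Integrable lam := Integrable.of_integral_ne_zero (by rw [hint]; exact one_ne_zero)
  obtain ⟨x₀, hx₀⟩ := hc.exists_forall_ge' 0
    ((hlim.eventually (gt_mem_nhds (hpos 0))).mono fun _ => le_of_lt)
  have : IsProbabilityMeasure ν := ⟨by
    rw [hν, withDensity_apply _ MeasurableSet.univ, Measure.restrict_univ,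
      ← ofReal_integral_eq_lintegral_ofReal hI (Eventually.of_forall h0), hint, ENNReal.ofReal_one]⟩
  rcases hmono with hup | hdown
  · exact tendsto_measure_pi_add_cube_sub_div_of_isUpperSet hc h0 hI hν hx₀ hA fun x y hxy hx =>
      hup x hx y hxy
  · have : IsProbabilityMeasure ν.neg := ⟨by rw [Measure.neg_apply, neg_univ, measure_univ]⟩
    have hup : IsUpperSet (-A) := IsLowerSet.neg fun x y hxy hx => hdown x hx y hxy
    have hcube : ∀ r : ℝ, -A + (univ : Set (Fin n)).pi (fun _ => Icc (-r) r)
        = -(A + (univ : Set (Fin n)).pi fun _ => Icc (-r) r) := fun r => by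
      rw [neg_add, Set.neg_pi]
      simp
    have := tendsto_measure_pi_add_cube_sub_div_of_isUpperSet (ν := ν.neg)
      (ρ := fun x => lam (-x)) (hc.comp continuous_neg) (fun x => h0 (-x)) hI.comp_neg
      (by rw [hν, neg_withDensity]) (fun x => hx₀ (-x)) hA.neg hup
    simpa only [hcube, pi_neg, Measure.neg_apply, neg_neg, geomInfl_neg] using this

theorem stmt4 (n : ℕ) (lam : ℝ → ℝ) (hC1 : ContDiff ℝ 1 lam) (hpos : ∀ z, 0 < lam z)
    (hint : ∫ x, lam x = 1) (hlim : Tendsto lam (cocompact ℝ) (nhds 0))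
    (hbdd : ∃ M, ∀ x, |deriv lam x| ≤ M)
    (ν : Measure ℝ) (hν : ν = volume.withDensity fun x => ENNReal.ofReal (lam x))
    (A : Set (Fin n → ℝ)) (hA : MeasurableSet A)
    (hmono : (∀ x ∈ A, ∀ y : Fin n → ℝ, (∀ i, x i ≤ y i) → y ∈ A) ∨
             (∀ x ∈ A, ∀ y : Fin n → ℝ, (∀ i, y i ≤ x i) → y ∈ A)) :
    Tendsto (fun r : ℝ =>
      (((Measure.pi fun _ : Fin n => ν) (A + (univ : Set (Fin n)).pi fun _ => Icc (-r) r)).toReal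
        - ((Measure.pi fun _ : Fin n => ν) A).toReal) / r)
      (nhdsWithin 0 (Ioi 0)) (nhds (∑ i, geomInfl n ν A i)) :=
  stmt4_general n lam hC1 hpos hint hlim ν hν A hA hmono
end

section
/- Let ν be a probability measure on ℝ with log-concave density λ, CDF Λ, and inverse Λ^{-1}. Then for every t ∈ (0,1), every Borel set A ⊆ ℝ with ν(A) = t, and every r > 0: ν(A + [-r,r]) ≥ min{Λ(Λ^{-1}(t) + r), 1 − Λ(Λ^{-1}(1−t) − r)}. If moreover λ is symmetric about its median, then ν(A + [-r,r]) ≥ Λ(Λ^{-1}(t) + r). -/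
/-!
For a log-concave density, `λ u · λ (v + h) ≤ λ (u + h) · λ v` whenever `u ≤ v` and `h ≥ 0`.
Integrated, this makes the masses `q ↦ Λ (Λ⁻¹ q + h)` and `q ↦ 1 - Λ (Λ⁻¹ (1 - q) - h)` of the
`h`-enlargements of the lower and upper half-lines of mass `q` concave on `(0, 1)`; hence so is
their minimum `Φ`, and `Φ q / q` is nonincreasing. The enlargement of an interval of mass `σ` has a
mass that is concave in the interval's position, with limits at both ends dominating the two
half-line values, so it is at least `Φ σ`. A compact set either has an enlargement covering its
convex hull, and is then handled like an interval, or splits at a gap of width more than `2h` into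
two pieces with disjoint enlargements; induction on the diameter gives `ν (K_h) ≥ ν K · Φ t / t`
whenever `ν K ≤ t`, and inner regularity passes to measurable sets. For a symmetric density the
two half-line profiles coincide.
-/

open MeasureTheory ProbabilityTheory Filter Set Real Pointwise
open scoped ENNReal

def LogConcave (lam : ℝ → ℝ) : Prop :=
  (∀ x, 0 ≤ lam x) ∧
    ∀ x y θ : ℝ, 0 ≤ θ → θ ≤ 1 → lam x ^ θ * lam y ^ (1 - θ) ≤ lam (θ * x + (1 - θ) * y)

namespace LogConcave

variable {lam : ℝ → ℝ}

lemma min_le_of_mem_Icc (hlam : LogConcave lam) {x y w : ℝ} (hw : w ∈ Icc x y) :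
    min (lam x) (lam y) ≤ lam w := by
  rw [← segment_eq_Icc (hw.1.trans hw.2)] at hw
  obtain ⟨a, b, ha, hb, hab, rfl⟩ := hw
  obtain rfl : b = 1 - a := by linarith
  have hm : 0 ≤ min (lam x) (lam y) := le_min (hlam.1 x) (hlam.1 y)
  calc min (lam x) (lam y) = min (lam x) (lam y) ^ a * min (lam x) (lam y) ^ (1 - a) := by
        rw [← rpow_add' hm (by norm_num), add_sub_cancel, rpow_one]
    _ ≤ lam x ^ a * lam y ^ (1 - a) :=
        mul_le_mul (rpow_le_rpow hm (min_le_left _ _) ha) (rpow_le_rpow hm (min_le_right _ _) hb)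
          (by positivity) (rpow_nonneg (hlam.1 x) a)
    _ ≤ lam (a • x + (1 - a) • y) := hlam.2 x y a ha (by linarith)

lemma mul_le_mul_of_add_eq (hlam : LogConcave lam) {x y p q : ℝ} (hp : p ∈ Icc x y)
    (hpq : p + q = x + y) : lam x * lam y ≤ lam p * lam q := by
  rw [← segment_eq_Icc (hp.1.trans hp.2)] at hp
  obtain ⟨a, b, ha, hb, hab, rfl⟩ := hp
  obtain rfl : q = b * x + a * y := by
    simp only [smul_eq_mul] at hpq
    linear_combination hpq - (x + y) * hab
  obtain rfl : b = 1 - a := by linarith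
  have hx := hlam.1 x
  have hy := hlam.1 y
  calc lam x * lam y
        = (lam x ^ a * lam y ^ (1 - a)) * (lam x ^ (1 - a) * lam y ^ (1 - (1 - a))) := by
        rw [sub_sub_cancel, mul_mul_mul_comm, ← rpow_add' hx (by norm_num),
          ← rpow_add' hy (by norm_num), add_sub_cancel, sub_add_cancel, rpow_one, rpow_one]
    _ ≤ lam (a * x + (1 - a) * y) * lam ((1 - a) * x + (1 - (1 - a)) * y) :=
        mul_le_mul (hlam.2 x y a ha (by linarith)) (hlam.2 x y (1 - a) hb (by linarith))
          (by positivity) (hlam.1 _)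
    _ = lam (a • x + (1 - a) • y) * lam ((1 - a) * x + a * y) := by rw [sub_sub_cancel]; rfl

end LogConcave

section Density

variable {lam : ℝ → ℝ} {ν : Measure ℝ}
  (hν : ν = volume.withDensity fun x => ENNReal.ofReal (lam x))
include hν

lemma exists_pos_of_measure_ne_zero {s : Set ℝ} (hs : MeasurableSet s) (h : ν s ≠ 0) :
    ∃ x ∈ s, 0 < lam x := by
  by_contra! H
  refine h ?_
  rw [hν, withDensity_apply _ hs]
  exact setLIntegral_eq_zero hs fun x hx => ENNReal.ofReal_eq_zero.2 (H x hx)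

lemma measure_Ioc_add_eq (a b h : ℝ) :
    ν (Ioc (a + h) (b + h)) = ∫⁻ x in Ioc a b, ENNReal.ofReal (lam (x + h)) := by
  rw [hν, withDensity_apply _ measurableSet_Ioc, ← image_add_const_Ioc]
  exact ((measurePreserving_add_right volume h).setLIntegral_comp_emb
    (measurableEmbedding_addRight h) (fun x => ENNReal.ofReal (lam x)) _).symm

lemma measure_Ioc_add_mul_le [IsFiniteMeasure ν] (hlam : LogConcave lam) (x y z : ℝ) {h : ℝ}
    (hh : 0 ≤ h) :
    ν (Ioc (y + h) (z + h)) * ν (Ioc x y) ≤ ν (Ioc (x + h) (y + h)) * ν (Ioc y z) := by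
  have hν0 (a b : ℝ) : ν (Ioc a b) = ∫⁻ u in Ioc a b, ENNReal.ofReal (lam u) := by
    simpa using measure_Ioc_add_eq hν a b 0
  have prod_eq_iter (f g : ℝ → ℝ) (hf : ∫⁻ u in Ioc y z, ENNReal.ofReal (f u) ≠ ∞) :
      (∫⁻ u in Ioc y z, ENNReal.ofReal (f u)) * ∫⁻ v in Ioc x y, ENNReal.ofReal (g v) =
        ∫⁻ v in Ioc x y, ∫⁻ u in Ioc y z, ENNReal.ofReal (f u) * ENNReal.ofReal (g v) := by
    rw [← lintegral_const_mul' _ _ hf]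
    exact lintegral_congr fun v => (lintegral_mul_const' _ _ ENNReal.ofReal_ne_top).symm
  rw [measure_Ioc_add_eq hν y z, measure_Ioc_add_eq hν x y, hν0, hν0,
    mul_comm _ (∫⁻ u in Ioc y z, _), prod_eq_iter, prod_eq_iter]
  · refine setLIntegral_mono' measurableSet_Ioc fun v hv => setLIntegral_mono' measurableSet_Ioc
      fun u hu => ?_
    rw [← ENNReal.ofReal_mul (hlam.1 _), ← ENNReal.ofReal_mul (hlam.1 _), mul_comm (lam (u + h)),
      mul_comm (lam u)]
    exact ENNReal.ofReal_le_ofReal <| hlam.mul_le_mul_of_add_eq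
      ⟨by linarith, by linarith [hv.2, hu.1]⟩ (by ring)
  · exact hν0 y z ▸ measure_ne_top ν _
  · exact measure_Ioc_add_eq hν y z h ▸ measure_ne_top ν _

end Density

section CDF

variable {lam : ℝ → ℝ} {ν : Measure ℝ} [IsProbabilityMeasure ν]

lemma measure_Ioc_eq_ofReal_cdf_sub (a b : ℝ) :
    ν (Ioc a b) = ENNReal.ofReal (cdf ν b - cdf ν a) := by
  rw [← StieltjesFunction.measure_Ioc, measure_cdf]

lemma measureReal_Ioc_eq_cdf_sub {a b : ℝ} (hab : a ≤ b) :
    ν.real (Ioc a b) = cdf ν b - cdf ν a := by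
  rw [measureReal_def, measure_Ioc_eq_ofReal_cdf_sub,
    ENNReal.toReal_ofReal (sub_nonneg.2 (monotone_cdf ν hab))]

lemma cdf_add_eq_one_sub_cdf_sub (hν : ν = volume.withDensity fun x => ENNReal.ofReal (lam x))
    {m : ℝ} (hsym : ∀ z, lam (m + z) = lam (m - z)) (z : ℝ) :
    cdf ν (m + z) = 1 - cdf ν (m - z) := by
  have : NullSingletonClass ν := hν ▸ inferInstance
  have hrefl : ν (Ici (m + z)) = ν (Iic (m - z)) := by
    rw [hν, withDensity_apply _ measurableSet_Ici, withDensity_apply _ measurableSet_Iic,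
      show Ici (m + z) = (fun x => 2 * m - x) '' Iic (m - z) by
        rw [image_const_sub_Iic]; ring_nf,
      ← (Measure.measurePreserving_sub_left volume (2 * m)).setLIntegral_comp_emb
        (measurableEmbedding_subLeft _)]
    refine setLIntegral_congr_fun measurableSet_Iic fun x _ => ?_
    rw [show 2 * m - x = m + (m - x) by ring, hsym, sub_sub_cancel]
  calc cdf ν (m + z) = 1 - ν.real (Ioi (m + z)) := by
        rw [cdf_eq_real, ← compl_Iic, measureReal_compl measurableSet_Iic, probReal_univ]
        ring
    _ = 1 - cdf ν (m - z) := by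
        rw [measureReal_congr Ioi_ae_eq_Ici, cdf_eq_real, measureReal_def, measureReal_def, hrefl]

variable (hlam : LogConcave lam) (hν : ν = volume.withDensity fun x => ENNReal.ofReal (lam x))
include hlam hν

lemma cdf_lt_cdf {a b : ℝ} (hab : a < b) (ha : 0 < cdf ν a) (hb : cdf ν b < 1) :
    cdf ν a < cdf ν b := by
  obtain ⟨u, hua, hu⟩ := exists_pos_of_measure_ne_zero hν measurableSet_Iic
    (ofReal_cdf ν a ▸ (ENNReal.ofReal_pos.2 ha).ne')
  obtain ⟨v, hbv, hv⟩ := exists_pos_of_measure_ne_zero hν measurableSet_Ioi (s := Ioi b) (by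
    rw [← compl_Iic, prob_compl_eq_one_sub measurableSet_Iic, ← ofReal_cdf]
    exact (tsub_pos_of_lt (ENNReal.ofReal_lt_one.2 hb)).ne')
  have hpos : 0 < ν (Ioc a b) := calc
    0 < ENNReal.ofReal (min (lam u) (lam v)) * volume (Ioc a b) := by
      rw [Real.volume_Ioc]
      exact ENNReal.mul_pos (ENNReal.ofReal_pos.2 (lt_min hu hv)).ne'
        (ENNReal.ofReal_pos.2 (sub_pos.2 hab)).ne'
    _ = ∫⁻ _ in Ioc a b, ENNReal.ofReal (min (lam u) (lam v)) := (setLIntegral_const _ _).symm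
    _ ≤ ∫⁻ w in Ioc a b, ENNReal.ofReal (lam w) := setLIntegral_mono' measurableSet_Ioc
          fun w hw => ENNReal.ofReal_le_ofReal
            (hlam.min_le_of_mem_Icc ⟨hua.trans hw.1.le, hw.2.trans hbv.le⟩)
    _ = ν (Ioc a b) := by rw [hν, withDensity_apply _ measurableSet_Ioc]
  rw [measure_Ioc_eq_ofReal_cdf_sub, ENNReal.ofReal_pos] at hpos
  linarith

lemma cdf_add_sub_mul_le {x y z h : ℝ} (hxy : x ≤ y) (hyz : y ≤ z) (hh : 0 ≤ h) :
    (cdf ν (z + h) - cdf ν (y + h)) * (cdf ν y - cdf ν x) ≤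
      (cdf ν (y + h) - cdf ν (x + h)) * (cdf ν z - cdf ν y) := by
  have key := measure_Ioc_add_mul_le hν hlam x y z hh
  have hmono := monotone_cdf ν
  simp only [measure_Ioc_eq_ofReal_cdf_sub] at key
  rwa [← ENNReal.ofReal_mul (sub_nonneg.2 (hmono (by linarith))), ← ENNReal.ofReal_mul
    (sub_nonneg.2 (hmono (by linarith))), ENNReal.ofReal_le_ofReal_iff
    (mul_nonneg (sub_nonneg.2 (hmono (by linarith))) (sub_nonneg.2 (hmono hyz)))] at key

end CDF

lemma le_of_continuous_of_forall_mem_Ioo {f g : ℝ → ℝ} (hf : Continuous f) (hg : Continuous g)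
    {ε₀ : ℝ} (hε₀ : 0 < ε₀) (hfg : ∀ ε ∈ Ioo 0 ε₀, f ε ≤ g ε) : f 0 ≤ g 0 :=
  le_of_tendsto_of_tendsto hf.continuousWithinAt hg.continuousWithinAt
    (eventually_of_mem (Ioo_mem_nhdsGT hε₀) hfg)

lemma ConcaveOn.mul_apply_le_mul_apply {f : ℝ → ℝ} {a : ℝ} (hf : ConcaveOn ℝ (Ioo 0 a) f)
    (hf0 : ∀ x ∈ Ioo 0 a, 0 ≤ f x) {q τ : ℝ} (hq : 0 < q) (hqτ : q ≤ τ) (hτ : τ < a) :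
    q * f τ ≤ τ * f q := by
  rcases hqτ.eq_or_lt with rfl | hqτ
  · rfl
  have key : ∀ s ∈ Ioo 0 q, (q - s) * f τ ≤ (τ - s) * f q := by
    intro s hs
    have hslope := hf.slope_anti_adjacent ⟨hs.1, by linarith [hs.2]⟩ ⟨by linarith, hτ⟩ hs.2 hqτ
    rw [div_le_div_iff₀ (by linarith) (by linarith [hs.2])] at hslope
    nlinarith [mul_nonneg (sub_nonneg.2 hqτ.le) (hf0 s ⟨hs.1, by linarith [hs.2]⟩)]
  simpa using le_of_continuous_of_forall_mem_Ioo (by fun_prop) (by fun_prop) hq key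

lemma ConvexOn.concaveOn_one_sub_comp_one_sub {f : ℝ → ℝ} (hf : ConvexOn ℝ (Ioo 0 1) f) :
    ConcaveOn ℝ (Ioo 0 1) fun q => 1 - f (1 - q) := by
  refine (((hf.comp_affineMap (AffineEquiv.constVSub ℝ (1 : ℝ)).toAffineMap).neg.add_const 1).subset
    (fun q hq => ?_) (convex_Ioo 0 1)).congr fun q _ => ?_
  · simp only [mem_preimage, AffineEquiv.coe_toAffineMap, AffineEquiv.coe_constVSub, vsub_eq_sub,
      mem_Ioo] at hq ⊢
    constructor <;> linarith [hq.1, hq.2]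
  · simp only [Pi.add_apply, Pi.neg_apply, Function.comp_apply, AffineEquiv.coe_toAffineMap,
      AffineEquiv.coe_constVSub, vsub_eq_sub]
    ring

/-- `min` of the masses of the `h`-enlargements of the half-lines `(-∞, invL q]` and
`[invL (1 - q), ∞)`, both of mass `q`. -/
noncomputable def halfLineProfile (ν : Measure ℝ) (invL : ℝ → ℝ) (h q : ℝ) : ℝ :=
  min (cdf ν (invL q + h)) (1 - cdf ν (invL (1 - q) - h))

lemma halfLineProfile_nonneg (ν : Measure ℝ) (invL : ℝ → ℝ) (h q : ℝ) :
    0 ≤ halfLineProfile ν invL h q :=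
  le_min (cdf_nonneg ν _) (sub_nonneg.2 (cdf_le_one ν _))

lemma halfLineProfile_le_one (ν : Measure ℝ) (invL : ℝ → ℝ) (h q : ℝ) :
    halfLineProfile ν invL h q ≤ 1 :=
  (min_le_left _ _).trans (cdf_le_one ν _)

section Enlargement

variable {ν : Measure ℝ} {K : Set ℝ} {g h : ℝ}

lemma lt_sub_of_notMem_add_Icc (hg : g ∉ K + Icc (-h) h) {k : ℝ} (hk : k ∈ K) (hkg : k ≤ g) :
    k < g - h :=
  lt_of_not_ge fun hle => hg ⟨k, hk, g - k, ⟨by linarith, by linarith⟩, by ring⟩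

lemma add_lt_of_notMem_add_Icc (hg : g ∉ K + Icc (-h) h) {k : ℝ} (hk : k ∈ K) (hgk : g ≤ k) :
    g + h < k :=
  lt_of_not_ge fun hle => hg ⟨k, hk, g - k, ⟨by linarith, by linarith⟩, by ring⟩

lemma Icc_sub_add_subset_add_Icc {c d : ℝ} (hc : c ∈ K) (hd : d ∈ K)
    (hcov : Icc c d ⊆ K + Icc (-h) h) : Icc (c - h) (d + h) ⊆ K + Icc (-h) h := by
  intro x hx
  rcases lt_or_ge x c with hxc | hxc
  · exact ⟨c, hc, x - c, ⟨by linarith [hx.1], by linarith [hx.1]⟩, by ring⟩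
  rcases le_or_gt x d with hxd | hxd
  · exact hcov ⟨hxc, hxd⟩
  · exact ⟨d, hd, x - d, ⟨by linarith [hx.2], by linarith [hx.2]⟩, by ring⟩

lemma measureReal_eq_inter_Iic_add_inter_Ici [IsFiniteMeasure ν] (hg : g ∉ K) :
    ν.real K = ν.real (K ∩ Iic g) + ν.real (K ∩ Ici g) := by
  rw [← measureReal_inter_add_sdiff (s := K) (μ := ν) measurableSet_Iic]
  congr 2
  ext x
  simp only [Set.mem_sdiff, mem_inter_iff, mem_Iic, mem_Ici, not_le, and_congr_right_iff]
  exact fun hx => ⟨le_of_lt, fun hgx => hgx.lt_of_ne (ne_of_mem_of_not_mem hx hg).symm⟩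

lemma measureReal_inter_Iic_add_Icc_add_le [IsFiniteMeasure ν] (hK : IsCompact K)
    (hg : g ∉ K + Icc (-h) h) :
    ν.real (K ∩ Iic g + Icc (-h) h) + ν.real (K ∩ Ici g + Icc (-h) h) ≤
      ν.real (K + Icc (-h) h) := by
  have hlt : K ∩ Iic g + Icc (-h) h ⊆ Iio g := by
    rintro _ ⟨k, ⟨hk, hkg⟩, e, he, rfl⟩
    exact (show k + e < g by linarith [he.2, lt_sub_of_notMem_add_Icc hg hk hkg])
  have hgt : K ∩ Ici g + Icc (-h) h ⊆ Ioi g := by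
    rintro _ ⟨k, ⟨hk, hkg⟩, e, he, rfl⟩
    exact (show g < k + e by linarith [he.1, add_lt_of_notMem_add_Icc hg hk hkg])
  rw [← measureReal_union
    (disjoint_of_subset (hlt.trans Iio_subset_Iic_self) hgt (Iic_disjoint_Ioi le_rfl))
    ((hK.inter_right isClosed_Ici).add isCompact_Icc).isClosed.measurableSet]
  exact measureReal_mono (union_subset (add_subset_add_right inter_subset_left)
    (add_subset_add_right inter_subset_left))

end Enlargement

section Isoperimetry

variable {lam : ℝ → ℝ} {ν : Measure ℝ} [IsProbabilityMeasure ν] (hlam : LogConcave lam)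
  (hν : ν = volume.withDensity fun x => ENNReal.ofReal (lam x)) {invL : ℝ → ℝ}
  (hinv : ∀ t ∈ Ioo (0 : ℝ) 1, cdf ν (invL t) = t)
include hlam hν hinv

lemma eq_quantile_of_cdf_eq {a q : ℝ} (hq : q ∈ Ioo 0 1) (ha : cdf ν a = q) : a = invL q := by
  by_contra hne
  rcases lt_or_gt_of_ne hne with hlt | hlt
  · exact (cdf_lt_cdf hlam hν hlt (ha ▸ hq.1) ((hinv q hq).symm ▸ hq.2)).ne
      (ha.trans (hinv q hq).symm)
  · exact (cdf_lt_cdf hlam hν hlt ((hinv q hq).symm ▸ hq.1) (ha ▸ hq.2)).ne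
      ((hinv q hq).trans ha.symm)

lemma monotoneOn_quantile : MonotoneOn invL (Ioo 0 1) := by
  intro p hp q hq hpq
  by_contra! hlt
  have := cdf_lt_cdf hlam hν hlt ((hinv q hq).symm ▸ hq.1) ((hinv p hp).symm ▸ hp.2)
  rw [hinv p hp, hinv q hq] at this
  linarith

lemma concaveOn_cdf_quantile_add {h : ℝ} (hh : 0 ≤ h) :
    ConcaveOn ℝ (Ioo 0 1) fun q => cdf ν (invL q + h) := by
  refine concaveOn_iff_slope_anti_adjacent.2 ⟨convex_Ioo 0 1, fun p q r hp hr hpq hqr => ?_⟩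
  have hq : q ∈ Ioo (0 : ℝ) 1 := ⟨hp.1.trans hpq, hqr.trans hr.2⟩
  have key := cdf_add_sub_mul_le hlam hν (monotoneOn_quantile hlam hν hinv hp hq hpq.le)
    (monotoneOn_quantile hlam hν hinv hq hr hqr.le) hh
  rw [hinv p hp, hinv q hq, hinv r hr] at key
  rwa [div_le_div_iff₀ (by linarith) (by linarith)]

lemma convexOn_cdf_quantile_sub {h : ℝ} (hh : 0 ≤ h) :
    ConvexOn ℝ (Ioo 0 1) fun q => cdf ν (invL q - h) := by
  refine convexOn_iff_slope_mono_adjacent.2 ⟨convex_Ioo 0 1, fun p q r hp hr hpq hqr => ?_⟩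
  have hq : q ∈ Ioo (0 : ℝ) 1 := ⟨hp.1.trans hpq, hqr.trans hr.2⟩
  have key := cdf_add_sub_mul_le hlam hν
    (by linarith [monotoneOn_quantile hlam hν hinv hp hq hpq.le] : invL p - h ≤ invL q - h)
    (by linarith [monotoneOn_quantile hlam hν hinv hq hr hqr.le] : invL q - h ≤ invL r - h) hh
  simp only [sub_add_cancel, hinv p hp, hinv q hq, hinv r hr] at key
  rw [div_le_div_iff₀ (by linarith) (by linarith)]
  linarith

lemma concaveOn_halfLineProfile {h : ℝ} (hh : 0 ≤ h) :
    ConcaveOn ℝ (Ioo 0 1) (halfLineProfile ν invL h) :=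
  (concaveOn_cdf_quantile_add hlam hν hinv hh).inf
    (convexOn_cdf_quantile_sub hlam hν hinv hh).concaveOn_one_sub_comp_one_sub

lemma monotoneOn_halfLineProfile (h : ℝ) : MonotoneOn (halfLineProfile ν invL h) (Ioo 0 1) := by
  intro p hp q hq hpq
  have hmono := monotoneOn_quantile hlam hν hinv
  refine min_le_min (monotone_cdf ν (by linarith [hmono hp hq hpq])) ?_
  have : invL (1 - q) ≤ invL (1 - p) :=
    hmono ⟨by linarith [hq.2], by linarith [hq.1]⟩ ⟨by linarith [hp.2], by linarith [hp.1]⟩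
      (by linarith)
  linarith [monotone_cdf ν (by linarith : invL (1 - q) - h ≤ invL (1 - p) - h)]

lemma halfLineProfile_le_cdf_quantile_add_sub {h σ p : ℝ} (hh : 0 ≤ h) (hσ : 0 < σ)
    (hp : p ∈ Ioo 0 (1 - σ)) :
    halfLineProfile ν invL h σ ≤ cdf ν (invL (σ + p) + h) - cdf ν (invL p - h) := by
  obtain ⟨hp0, hp1⟩ := hp
  have hmono := monotone_cdf ν
  have hquant := monotoneOn_quantile hlam hν hinv
  -- `ψ s` is the mass of the enlargement of `[invL s, invL (σ + s)]`, an interval of mass `σ`.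
  have hψ : ConcaveOn ℝ (Ioo 0 (1 - σ)) fun s => cdf ν (invL (σ + s) + h) - cdf ν (invL s - h) :=
    (((concaveOn_cdf_quantile_add hlam hν hinv hh).translate_right σ).subset
      (fun s hs => ⟨by simp; linarith [hs.1], by simp; linarith [hs.2]⟩) (convex_Ioo _ _)).sub
      ((convexOn_cdf_quantile_sub hlam hν hinv hh).subset (Ioo_subset_Ioo_right (by linarith))
        (convex_Ioo _ _))
  have key : ∀ ε ∈ Ioo 0 (min p (1 - σ - p)),
      halfLineProfile ν invL h σ - ε ≤ cdf ν (invL (σ + p) + h) - cdf ν (invL p - h) := by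
    rintro ε ⟨hε, hεp⟩
    rw [lt_min_iff] at hεp
    refine le_trans (le_min ?_ ?_) (hψ.min_le_of_mem_Icc (x := ε) (y := 1 - σ - ε)
      ⟨hε, by linarith⟩ ⟨by linarith, by linarith⟩ ⟨hεp.1.le, by linarith⟩)
    · have hq : invL σ ≤ invL (σ + ε) :=
        hquant ⟨hσ, by linarith⟩ ⟨by linarith, by linarith⟩ (by linarith)
      have hR : cdf ν (invL σ + h) ≤ cdf ν (invL (σ + ε) + h) := hmono (by linarith)
      have hM : cdf ν (invL ε - h) ≤ ε :=
        (hmono (by linarith : invL ε - h ≤ invL ε)).trans_eq (hinv ε ⟨hε, by linarith⟩)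
      have := min_le_left (cdf ν (invL σ + h)) (1 - cdf ν (invL (1 - σ) - h))
      unfold halfLineProfile
      linarith
    · rw [show σ + (1 - σ - ε) = 1 - ε by ring]
      have hR : 1 - ε ≤ cdf ν (invL (1 - ε) + h) :=
        (hinv (1 - ε) ⟨by linarith, by linarith⟩).symm.trans_le (hmono (by linarith))
      have hq : invL (1 - σ - ε) ≤ invL (1 - σ) :=
        hquant ⟨by linarith, by linarith⟩ ⟨by linarith, by linarith⟩ (by linarith)
      have hM : cdf ν (invL (1 - σ - ε) - h) ≤ cdf ν (invL (1 - σ) - h) := hmono (by linarith)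
      have := min_le_right (cdf ν (invL σ + h)) (1 - cdf ν (invL (1 - σ) - h))
      unfold halfLineProfile
      linarith
  simpa using le_of_continuous_of_forall_mem_Ioo (f := fun ε => halfLineProfile ν invL h σ - ε)
    (by fun_prop) continuous_const (lt_min hp0 (by linarith)) key

lemma halfLineProfile_le_cdf_sub {c d h : ℝ} (hh : 0 ≤ h) (hσ : cdf ν d - cdf ν c ∈ Ioo 0 1) :
    halfLineProfile ν invL h (cdf ν d - cdf ν c) ≤ cdf ν (d + h) - cdf ν (c - h) := by
  obtain ⟨σ, hσdef⟩ : ∃ σ, cdf ν d - cdf ν c = σ := ⟨_, rfl⟩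
  rw [hσdef] at hσ ⊢
  have hmono := monotone_cdf ν
  rcases (cdf_nonneg ν c).eq_or_lt with hc | hc
  · have hd : d = invL σ := eq_quantile_of_cdf_eq hlam hν hinv hσ (by linarith)
    have hch : cdf ν (c - h) = 0 := le_antisymm (hc ▸ hmono (by linarith)) (cdf_nonneg ν _)
    rw [hch, sub_zero, hd]
    exact min_le_left _ _
  rcases (cdf_le_one ν d).eq_or_lt with hd | hd
  · have hc' : c = invL (1 - σ) := eq_quantile_of_cdf_eq hlam hν hinv
      ⟨by linarith [hσ.2], by linarith [hσ.1]⟩ (by linarith)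
    have hdh : cdf ν (d + h) = 1 := le_antisymm (cdf_le_one ν _) (hd ▸ hmono (by linarith))
    rw [hdh, hc']
    exact min_le_right _ _
  have hc' : c = invL (cdf ν c) :=
    eq_quantile_of_cdf_eq hlam hν hinv ⟨hc, by linarith [hσ.1]⟩ rfl
  have hd' : d = invL (σ + cdf ν c) :=
    eq_quantile_of_cdf_eq hlam hν hinv ⟨by linarith [hσ.1], by linarith⟩ (by linarith)
  have := halfLineProfile_le_cdf_quantile_add_sub hlam hν hinv hh hσ.1 ⟨hc, by linarith [hσ.1]⟩
  rwa [← hc', ← hd'] at this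

lemma mul_halfLineProfile_le_of_subset_Icc {K : Set ℝ} {c d h τ : ℝ} (hcd : c ≤ d) (hh : 0 ≤ h)
    (hτ : τ ∈ Ioo 0 1) (hK : K ⊆ Icc c d) (hcover : Icc (c - h) (d + h) ⊆ K + Icc (-h) h)
    (hKτ : ν.real K ≤ τ) :
    ν.real K * halfLineProfile ν invL h τ ≤ τ * ν.real (K + Icc (-h) h) := by
  have : NullSingletonClass ν := hν ▸ inferInstance
  set σ := cdf ν d - cdf ν c with hσdef
  have hKσ : ν.real K ≤ σ := calc
    ν.real K ≤ ν.real (Icc c d) := measureReal_mono hK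
    _ = σ := by rw [← measureReal_congr Ioc_ae_eq_Icc, measureReal_Ioc_eq_cdf_sub hcd]
  have hσh : σ ≤ cdf ν (d + h) - cdf ν (c - h) := by
    linarith [monotone_cdf ν (by linarith : d ≤ d + h), monotone_cdf ν (by linarith : c - h ≤ c)]
  have hcover' : cdf ν (d + h) - cdf ν (c - h) ≤ ν.real (K + Icc (-h) h) := by
    rw [← measureReal_Ioc_eq_cdf_sub (by linarith)]
    exact measureReal_mono (Ioc_subset_Icc_self.trans hcover)
  have hK0 : 0 ≤ ν.real K := measureReal_nonneg
  have hΦ0 := halfLineProfile_nonneg ν invL h τ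
  refine le_trans ?_ (mul_le_mul_of_nonneg_left hcover' hτ.1.le)
  rcases le_or_gt σ 0 with hσ0 | hσ0
  · rw [le_antisymm (hKσ.trans hσ0) hK0, zero_mul]
    exact mul_nonneg hτ.1.le (sub_nonneg.2 (monotone_cdf ν (by linarith)))
  rcases le_or_gt 1 σ with hσ1 | hσ1
  · calc ν.real K * halfLineProfile ν invL h τ ≤ τ * 1 :=
          mul_le_mul hKτ (halfLineProfile_le_one ν invL h τ) hΦ0 hτ.1.le
      _ ≤ τ * (cdf ν (d + h) - cdf ν (c - h)) := mul_le_mul_of_nonneg_left (by linarith) hτ.1.le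
  have hint := halfLineProfile_le_cdf_sub hlam hν hinv hh ⟨hσ0, hσ1⟩
  rcases le_total τ σ with hτσ | hστ
  · calc ν.real K * halfLineProfile ν invL h τ ≤ τ * halfLineProfile ν invL h τ :=
          mul_le_mul_of_nonneg_right hKτ hΦ0
      _ ≤ τ * halfLineProfile ν invL h σ := mul_le_mul_of_nonneg_left
          (monotoneOn_halfLineProfile hlam hν hinv h hτ ⟨hσ0, hσ1⟩ hτσ) hτ.1.le
      _ ≤ τ * (cdf ν (d + h) - cdf ν (c - h)) := mul_le_mul_of_nonneg_left hint hτ.1.le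
  · calc ν.real K * halfLineProfile ν invL h τ ≤ σ * halfLineProfile ν invL h τ :=
          mul_le_mul_of_nonneg_right hKσ hΦ0
      _ ≤ τ * halfLineProfile ν invL h σ :=
          (concaveOn_halfLineProfile hlam hν hinv hh).mul_apply_le_mul_apply
            (fun x _ => halfLineProfile_nonneg ν invL h x) hσ0 hστ hτ.2
      _ ≤ τ * (cdf ν (d + h) - cdf ν (c - h)) := mul_le_mul_of_nonneg_left hint hτ.1.le

lemma mul_halfLineProfile_le_of_diam_le {h τ : ℝ} (hh : 0 < h) (hτ : τ ∈ Ioo 0 1) (n : ℕ)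
    {K : Set ℝ} (hK : IsCompact K) (hne : K.Nonempty) (hdiam : ∀ x ∈ K, ∀ y ∈ K, y - x ≤ 2 * h * n)
    (hKτ : ν.real K ≤ τ) :
    ν.real K * halfLineProfile ν invL h τ ≤ τ * ν.real (K + Icc (-h) h) := by
  induction n using Nat.strong_induction_on generalizing K with
  | _ n ih =>
    have hc := hK.sInf_mem hne
    have hd := hK.sSup_mem hne
    have hKcd : K ⊆ Icc (sInf K) (sSup K) := fun x hx =>
      ⟨csInf_le hK.bddBelow hx, le_csSup hK.bddAbove hx⟩
    by_cases hcov : Icc (sInf K) (sSup K) ⊆ K + Icc (-h) h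
    · exact mul_halfLineProfile_le_of_subset_Icc hlam hν hinv (hKcd hc).2 hh.le hτ hKcd
        (Icc_sub_add_subset_add_Icc hc hd hcov) hKτ
    obtain ⟨g, ⟨hcg, hgd⟩, hgK⟩ := not_subset.1 hcov
    have hgc := lt_sub_of_notMem_add_Icc hgK hc hcg
    have hdg := add_lt_of_notMem_add_Icc hgK hd hgd
    have hdiam_cd := hdiam _ hc _ hd
    obtain ⟨m, rfl⟩ : ∃ m, n = m + 1 := Nat.exists_eq_add_one.2 <| Nat.pos_of_ne_zero fun hn => by
      simp only [hn, CharP.cast_eq_zero, mul_zero] at hdiam_cd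
      linarith
    push_cast at hdiam_cd
    have hK₁ := ih m (by omega) (hK.inter_right isClosed_Iic) ⟨_, hc, hcg⟩
      (fun x hx y hy => by linarith [(hKcd hx.1).1, lt_sub_of_notMem_add_Icc hgK hy.1 hy.2])
      ((measureReal_mono inter_subset_left).trans hKτ)
    have hK₂ := ih m (by omega) (hK.inter_right isClosed_Ici) ⟨_, hd, hgd⟩
      (fun x hx y hy => by linarith [(hKcd hy.1).2, add_lt_of_notMem_add_Icc hgK hx.1 hx.2])
      ((measureReal_mono inter_subset_left).trans hKτ)
    have hgK' : g ∉ K := fun hg => by linarith [lt_sub_of_notMem_add_Icc hgK hg le_rfl]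
    calc ν.real K * halfLineProfile ν invL h τ
        = ν.real (K ∩ Iic g) * halfLineProfile ν invL h τ +
            ν.real (K ∩ Ici g) * halfLineProfile ν invL h τ := by
          rw [measureReal_eq_inter_Iic_add_inter_Ici hgK', add_mul]
      _ ≤ τ * (ν.real (K ∩ Iic g + Icc (-h) h) + ν.real (K ∩ Ici g + Icc (-h) h)) := by
          rw [mul_add]; exact add_le_add hK₁ hK₂
      _ ≤ τ * ν.real (K + Icc (-h) h) :=
          mul_le_mul_of_nonneg_left (measureReal_inter_Iic_add_Icc_add_le hK hgK) hτ.1.le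

lemma mul_halfLineProfile_le_of_isCompact {h τ : ℝ} (hh : 0 < h) (hτ : τ ∈ Ioo 0 1) {K : Set ℝ}
    (hK : IsCompact K) (hKτ : ν.real K ≤ τ) :
    ν.real K * halfLineProfile ν invL h τ ≤ τ * ν.real (K + Icc (-h) h) := by
  rcases K.eq_empty_or_nonempty with rfl | hne
  · simp
  obtain ⟨n, hn⟩ : ∃ n : ℕ, sSup K - sInf K ≤ 2 * h * n :=
    ⟨⌈(sSup K - sInf K) / (2 * h)⌉₊, by rw [← div_le_iff₀' (by positivity)]; exact Nat.le_ceil _⟩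
  exact mul_halfLineProfile_le_of_diam_le hlam hν hinv hh hτ n hK hne (fun x hx y hy => by
    linarith [csInf_le hK.bddBelow hx, le_csSup hK.bddAbove hy]) hKτ

theorem halfLineProfile_le_measureReal_add_Icc {A : Set ℝ} (hA : MeasurableSet A) {t h : ℝ}
    (ht : t ∈ Ioo 0 1) (hAt : ν.real A = t) (hh : 0 < h) :
    halfLineProfile ν invL h t ≤ ν.real (A + Icc (-h) h) := by
  have key : ∀ ε ∈ Ioo 0 t,
      (t - ε) * halfLineProfile ν invL h t ≤ t * ν.real (A + Icc (-h) h) := by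
    rintro ε ⟨hε, hεt⟩
    obtain ⟨K, hKA, hK, htK⟩ := hA.exists_lt_isCompact_of_ne_top (measure_ne_top ν A)
      (r := ENNReal.ofReal (t - ε)) (by
        rw [← ofReal_measureReal, hAt]; exact ENNReal.ofReal_lt_ofReal_iff ht.1 |>.2 (by linarith))
    rw [ENNReal.ofReal_lt_iff_lt_toReal (by linarith) (measure_ne_top ν K)] at htK
    calc (t - ε) * halfLineProfile ν invL h t ≤ ν.real K * halfLineProfile ν invL h t :=
          mul_le_mul_of_nonneg_right htK.le (halfLineProfile_nonneg ν invL h t)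
      _ ≤ t * ν.real (K + Icc (-h) h) := mul_halfLineProfile_le_of_isCompact hlam hν hinv hh ht hK
          (hAt ▸ measureReal_mono hKA)
      _ ≤ t * ν.real (A + Icc (-h) h) :=
          mul_le_mul_of_nonneg_left (measureReal_mono (add_subset_add_right hKA)) ht.1.le
  have := le_of_continuous_of_forall_mem_Ioo (f := fun ε => (t - ε) * halfLineProfile ν invL h t)
    (by fun_prop) continuous_const ht.1 key
  simp only [sub_zero] at this
  exact le_of_mul_le_mul_left this ht.1

lemma halfLineProfile_eq_of_symm {m : ℝ} (hsym : ∀ z, lam (m + z) = lam (m - z)) {t : ℝ}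
    (ht : t ∈ Ioo 0 1) (h : ℝ) : halfLineProfile ν invL h t = cdf ν (invL t + h) := by
  have hcdf := cdf_add_eq_one_sub_cdf_sub hν hsym
  have hw : m + (m - invL (1 - t)) = invL t := eq_quantile_of_cdf_eq hlam hν hinv ht (by
    rw [hcdf, sub_sub_cancel, hinv _ ⟨by linarith [ht.2], by linarith [ht.1]⟩]
    ring)
  have hupper : 1 - cdf ν (invL (1 - t) - h) = cdf ν (invL t + h) := by
    rw [← hw, add_assoc, hcdf, show m - (m - invL (1 - t) + h) = invL (1 - t) - h by ring]
  rw [halfLineProfile, hupper, min_self]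

end Isoperimetry

theorem stmt7 (lam : ℝ → ℝ) (hnn : ∀ x, 0 ≤ lam x)
    (hlc : ∀ x y θ : ℝ, 0 ≤ θ → θ ≤ 1 →
      lam x ^ θ * lam y ^ (1 - θ) ≤ lam (θ * x + (1 - θ) * y))
    (ν : Measure ℝ) [IsProbabilityMeasure ν]
    (hν : ν = volume.withDensity fun x => ENNReal.ofReal (lam x))
    (Lam : ℝ → ℝ) (hLam : ∀ x, Lam x = (ν (Iic x)).toReal)
    (invL : ℝ → ℝ) (hinv : ∀ t ∈ Ioo (0:ℝ) 1, Lam (invL t) = t)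
    (t : ℝ) (ht : t ∈ Ioo (0:ℝ) 1)
    (A : Set ℝ) (hA : MeasurableSet A) (hAt : (ν A).toReal = t)
    (r : ℝ) (hr : 0 < r) :
    min (Lam (invL t + r)) (1 - Lam (invL (1 - t) - r)) ≤ (ν (A + Icc (-r) r)).toReal ∧
    ((∃ m, Lam m = 1/2 ∧ ∀ z, lam (m + z) = lam (m - z)) →
      Lam (invL t + r) ≤ (ν (A + Icc (-r) r)).toReal) := by
  obtain rfl : Lam = cdf ν := funext fun x => (hLam x).trans (cdf_eq_real ν x).symm
  have hlam : LogConcave lam := ⟨hnn, hlc⟩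
  have hprofile := halfLineProfile_le_measureReal_add_Icc hlam hν hinv hA ht hAt hr
  refine ⟨hprofile, ?_⟩
  rintro ⟨m, -, hsym⟩
  rwa [halfLineProfile_eq_of_symm hlam hν hinv hsym ht] at hprofile
end

section
/- Fix ρ > 1 and let B_n = (−∞, a_n]ⁿ ⊆ ℝⁿ where a_n is chosen so that Φ_ρ(a_n)ⁿ = 1/2 (μ_ρ the Boltzmann measure with parameter ρ). Then there is a constant c = c(ρ) such that for all n and all 1 ≤ i ≤ n, the geometric influence satisfies I_i^G(B_n) ≤ c·(log n)^{1−1/ρ}/n; explicitly, I_i^G(B_n) = (1/2)^{(n−1)/n} φ_ρ(a_n). -/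
open MeasureTheory ProbabilityTheory Filter Set Real Pointwise

/-- The Boltzmann measure with parameter ρ. -/
noncomputable def boltz (ρ : ℝ) : Measure ℝ :=
  volume.withDensity fun x => ENNReal.ofReal (Real.exp (-|x| ^ ρ) / (2 * Real.Gamma (1 + 1/ρ)))

/-- The Boltzmann density. -/
noncomputable def boltzPhi (ρ x : ℝ) : ℝ := Real.exp (-|x| ^ ρ) / (2 * Real.Gamma (1 + 1/ρ))

/-! The fiber of the box in direction `i` is the half-line `(-∞, a]` exactly when the other
`n - 1` coordinates lie below `a`, so `I_i = Φ(a)^(n-1) φ(a)`, and the Minkowski content of a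
half-line is the value of the density there. For the bound, `Φ(a)^n = 1/2` makes the tail
`T(a) = 1 - 2^(-1/n)` of order `1/n`. For `a ≥ 1` the Mills-type estimates
`T(a) ≤ φ(a) ≤ ρ e^e a^(ρ-1) T(a)` hold: the first forces `e^(-a^ρ) ≳ 1/n`, i.e. `a^ρ = O(log n)`,
and then the second gives `φ(a) = O((log n)^(1-1/ρ) / n)`. For `a < 1`, `T(a) ≥ T(1) > 0`
bounds `n`, while `φ` is bounded. -/

section Minkowski

lemma Iic_add_Icc_neg (a : ℝ) {r : ℝ} (hr : 0 ≤ r) : Iic a + Icc (-r) r = Iic (a + r) := by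
  ext x
  simp only [Set.mem_add, mem_Iic, mem_Icc]
  constructor
  · rintro ⟨u, hu, v, ⟨-, hv⟩, rfl⟩
    linarith
  · intro hx
    refine ⟨min a (x + r), min_le_left _ _, x - min a (x + r), ⟨?_, ?_⟩, by ring⟩
    · linarith [min_le_right a (x + r)]
    · rcases min_choice a (x + r) with h | h <;> rw [h] <;> linarith

lemma mink_empty (ν : Measure ℝ) : mink ν ∅ = 0 := by
  simp [mink]

lemma mink_Iic_of_hasDerivAt {ν : Measure ℝ} {a d : ℝ}
    (h : HasDerivAt (fun x ↦ (ν (Iic x)).toReal) d a) : mink ν (Iic a) = d := by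
  refine h.tendsto_slope_zero_right.congr' ?_ |>.liminf_eq
  filter_upwards [self_mem_nhdsWithin] with r (hr : 0 < r)
  rw [Iic_add_Icc_neg a hr.le, smul_eq_mul, inv_mul_eq_div]

end Minkowski

section Box

variable {n : ℕ}

lemma fiber_box (a : ℝ) (i : Fin n) (x : Fin n → ℝ) :
    fiber {x : Fin n → ℝ | ∀ j, x j ≤ a} i x =
      if ∀ j ≠ i, x j ≤ a then Iic a else ∅ := by
  ext y
  simp only [fiber, mem_ofPred_eq, Function.update_apply]
  split_ifs with h
  · exact ⟨fun hy ↦ by simpa using hy i, fun hy j ↦ by split_ifs with hj; exacts [hy, h j hj]⟩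
  · exact iff_of_false (fun hy ↦ h fun j hj ↦ by simpa [hj] using hy j) (notMem_empty y)


lemma geomInfl_box (ν : Measure ℝ) [IsProbabilityMeasure ν] (a : ℝ) (i : Fin n) :
    geomInfl n ν {x | ∀ j, x j ≤ a} i = (ν (Iic a)).toReal ^ (n - 1) * mink ν (Iic a) := by
  classical
  set S : Set (Fin n → ℝ) := univ.pi (Function.update (fun _ ↦ Iic a) i univ)
  have hS : MeasurableSet S :=
    .univ_pi fun j ↦ by rcases eq_or_ne j i with rfl | hj <;> simp [*, measurableSet_Iic]
  have hmem (x : Fin n → ℝ) : x ∈ S ↔ ∀ j ≠ i, x j ≤ a := by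
    refine mem_univ_pi.trans (forall_congr' fun j ↦ ?_)
    rcases eq_or_ne j i with rfl | hj <;> simp [*]
  have hfiber : (fun x ↦ mink ν (fiber {x | ∀ j, x j ≤ a} i x)) =
      S.indicator fun _ ↦ mink ν (Iic a) := by
    ext x
    rw [fiber_box]
    split_ifs with h
    · rw [indicator_of_mem ((hmem x).2 h)]
    · rw [indicator_of_notMem (mt (hmem x).1 h), mink_empty]
  have hprod : ∏ j, ν (Function.update (fun _ ↦ Iic a) i univ j) = ν (Iic a) ^ (n - 1) := by
    rw [← Finset.mul_prod_erase _ _ (Finset.mem_univ i)]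
    simp +contextual [Finset.prod_congr rfl, Finset.card_erase_of_mem]
  rw [geomInfl, hfiber, integral_indicator_const _ hS, measureReal_def, Measure.pi_pi, hprod,
    ENNReal.toReal_pow, smul_eq_mul]

end Box

section Boltzmann

variable {ρ : ℝ}

lemma boltzPhi_pos (hρ : 0 < ρ) (x : ℝ) : 0 < boltzPhi ρ x := by
  unfold boltzPhi
  positivity

lemma boltzPhi_of_nonneg {x : ℝ} (hx : 0 ≤ x) :
    boltzPhi ρ x = exp (-x ^ ρ) / (2 * Gamma (1 + 1 / ρ)) := by
  rw [boltzPhi, abs_of_nonneg hx]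

lemma boltzPhi_le (hρ : 0 < ρ) (x : ℝ) : boltzPhi ρ x ≤ (2 * Gamma (1 + 1 / ρ))⁻¹ := by
  rw [boltzPhi, div_eq_mul_inv]
  exact mul_le_of_le_one_left (by positivity) (exp_le_one_iff.2 (by simp; positivity))

lemma continuous_boltzPhi (hρ : 0 < ρ) : Continuous (boltzPhi ρ) :=
  ((continuous_abs.rpow_const fun _ ↦ .inr hρ.le).neg.rexp).div_const _

lemma integral_boltzPhi (hρ : 0 < ρ) : ∫ x, boltzPhi ρ x = 1 := by
  simp only [boltzPhi, integral_div]
  rw [integral_comp_abs (f := fun y ↦ exp (-y ^ ρ)), integral_exp_neg_rpow hρ, add_comm]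
  field_simp

lemma integrable_boltzPhi (hρ : 0 < ρ) : Integrable (boltzPhi ρ) :=
  .of_integral_ne_zero (by simp [integral_boltzPhi hρ])

lemma boltz_eq_withDensity :
    boltz ρ = volume.withDensity fun x ↦ ENNReal.ofReal (boltzPhi ρ x) :=
  rfl

lemma boltz_apply_toReal (hρ : 0 < ρ) {s : Set ℝ} (hs : MeasurableSet s) :
    (boltz ρ s).toReal = ∫ x in s, boltzPhi ρ x := by
  rw [boltz_eq_withDensity, withDensity_apply _ hs, ← ofReal_integral_eq_lintegral_ofReal
    (integrable_boltzPhi hρ).integrableOn (.of_forall fun x ↦ (boltzPhi_pos hρ x).le),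
    ENNReal.toReal_ofReal (setIntegral_nonneg hs fun x _ ↦ (boltzPhi_pos hρ x).le)]

lemma isProbabilityMeasure_boltz (hρ : 0 < ρ) : IsProbabilityMeasure (boltz ρ) := by
  refine ⟨(ENNReal.toReal_eq_one_iff _).1 ?_⟩
  rw [boltz_apply_toReal hρ .univ, setIntegral_univ, integral_boltzPhi hρ]

lemma hasDerivAt_boltz_Iic (hρ : 0 < ρ) (a : ℝ) :
    HasDerivAt (fun x ↦ (boltz ρ (Iic x)).toReal) (boltzPhi ρ a) a := by
  have hint (x : ℝ) : IntegrableOn (boltzPhi ρ) (Iic x) := (integrable_boltzPhi hρ).integrableOn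
  have hcdf : (fun x ↦ (boltz ρ (Iic x)).toReal) =
      fun x ↦ (boltz ρ (Iic a)).toReal + ∫ y in a..x, boltzPhi ρ y := by
    ext x
    rw [← intervalIntegral.integral_Iic_sub_Iic (hint a) (hint x),
      boltz_apply_toReal hρ measurableSet_Iic, boltz_apply_toReal hρ measurableSet_Iic,
      add_sub_cancel]
  rw [hcdf]
  exact ((continuous_boltzPhi hρ).integral_hasStrictDerivAt a a).hasDerivAt.const_add _

lemma mink_boltz_Iic (hρ : 0 < ρ) (a : ℝ) : mink (boltz ρ) (Iic a) = boltzPhi ρ a :=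
  mink_Iic_of_hasDerivAt (hasDerivAt_boltz_Iic hρ a)

end Boltzmann

section Elementary

lemma pow_pred_eq_rpow_of_pow_eq {t s : ℝ} {n : ℕ} (hn : n ≠ 0) (ht : 0 ≤ t) (h : t ^ n = s) :
    t ^ (n - 1) = s ^ (((n : ℝ) - 1) / n) := by
  subst h
  rw [← rpow_natCast t n, ← rpow_mul ht, ← rpow_natCast, Nat.cast_pred (Nat.pos_of_ne_zero hn)]
  congr 1
  field_simp

lemma half_le_one_sub_exp_neg {u : ℝ} (hu0 : 0 ≤ u) (hu : u ≤ log 2) :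
    u / 2 ≤ 1 - exp (-u) := by
  have hhalf : 1 / 2 ≤ exp (-u) := by
    calc (1 : ℝ) / 2 = exp (-log 2) := by rw [exp_neg, exp_log two_pos, one_div]
      _ ≤ exp (-u) := by gcongr
  have h := mul_le_mul_of_nonneg_right (add_one_le_exp u) (exp_pos (-u)).le
  rw [← exp_add, add_neg_cancel, exp_zero] at h
  nlinarith

lemma one_sub_mem_Icc_of_pow_eq_half {t : ℝ} {n : ℕ} (hn : n ≠ 0) (ht : 0 ≤ t)
    (h : t ^ n = 1 / 2) : 1 - t ∈ Icc (log 2 / (2 * n)) (log 2 / n) := by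
  have hn1 : (1 : ℝ) ≤ n := Nat.one_le_cast.2 (Nat.pos_of_ne_zero hn)
  have hexp : t = exp (-(log 2 / n)) := by
    rw [← pow_rpow_inv_natCast ht hn, h, rpow_def_of_pos (by norm_num), one_div, log_inv,
      neg_mul, div_eq_mul_inv]
  rw [hexp]
  constructor
  · calc log 2 / (2 * n) = log 2 / n / 2 := by ring
      _ ≤ 1 - exp (-(log 2 / n)) :=
          half_le_one_sub_exp_neg (by positivity) (div_le_self (log_nonneg one_le_two) hn1)
  · linarith [add_one_le_exp (-(log 2 / n))]

lemma le_mul_log_of_div_le_exp_neg {β x y : ℝ} (hβ : 0 < β) (hx : 2 ≤ x)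
    (h : β / x ≤ exp (-y)) : y ≤ (1 + |log β| / log 2) * log x := by
  have hlog := log_le_log (by positivity) h
  rw [log_exp, log_div hβ.ne' (by positivity)] at hlog
  have hlog2 : log 2 ≤ log x := log_le_log two_pos hx
  have habs : |log β| ≤ |log β| / log 2 * log x := by
    rw [div_mul_eq_mul_div, le_div_iff₀ (log_pos one_lt_two)]
    exact mul_le_mul_of_nonneg_left hlog2 (abs_nonneg _)
  rw [add_mul, one_mul]
  linarith [neg_le_abs (log β)]

end Elementary

section Tails

variable {ρ : ℝ}

lemma boltzPhi_antitoneOn (hρ : 0 < ρ) : AntitoneOn (boltzPhi ρ) (Ici 0) := by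
  intro x (hx : 0 ≤ x) y (hy : 0 ≤ y) hxy
  rw [boltzPhi_of_nonneg hx, boltzPhi_of_nonneg hy]
  gcongr

lemma boltzPhi_eq_mul_exp {a x : ℝ} (ha : 0 ≤ a) (hx : 0 ≤ x) :
    boltzPhi ρ x = boltzPhi ρ a * exp (a ^ ρ - x ^ ρ) := by
  rw [boltzPhi_of_nonneg ha, boltzPhi_of_nonneg hx, div_mul_eq_mul_div, ← exp_add]
  ring_nf

lemma sub_le_rpow_sub_rpow (hρ : 1 ≤ ρ) {a t : ℝ} (ha : 1 ≤ a) (hat : a ≤ t) :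
    t - a ≤ t ^ ρ - a ^ ρ := by
  have ha0 : 0 < a := by linarith
  have ht0 : 0 < t := by linarith
  have h1 : a ^ (ρ - 1) ≤ t ^ (ρ - 1) := rpow_le_rpow ha0.le hat (by linarith)
  have h2 : 1 ≤ a ^ (ρ - 1) := one_le_rpow ha (by linarith)
  rw [← sub_add_cancel ρ 1, rpow_add_one ht0.ne', rpow_add_one ha0.ne']
  nlinarith [mul_le_mul_of_nonneg_right h1 ht0.le]

lemma boltz_Ioi_le_boltzPhi (hρ : 1 ≤ ρ) {a : ℝ} (ha : 1 ≤ a) :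
    (boltz ρ (Ioi a)).toReal ≤ boltzPhi ρ a := by
  have hρ0 : 0 < ρ := by linarith
  rw [boltz_apply_toReal hρ0 measurableSet_Ioi]
  calc ∫ x in Ioi a, boltzPhi ρ x ≤ ∫ x in Ioi a, boltzPhi ρ a * exp a * exp (-x) := by
        refine setIntegral_mono_on (integrable_boltzPhi hρ0).integrableOn
          ((integrableOn_exp_neg_Ioi a).const_mul _) measurableSet_Ioi fun x (hx : a < x) ↦ ?_
        rw [boltzPhi_eq_mul_exp (a := a) (by linarith) (by linarith), mul_assoc, ← exp_add]
        have := boltzPhi_pos hρ0 a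
        gcongr
        linarith [sub_le_rpow_sub_rpow hρ ha hx.le]
    _ = boltzPhi ρ a := by
        rw [integral_const_mul, integral_exp_neg_Ioi, mul_assoc, ← exp_add, add_neg_cancel,
          exp_zero, mul_one]

lemma rpow_add_inv_le (hρ : 1 ≤ ρ) {a : ℝ} (ha : 1 ≤ a) :
    (a + (ρ * a ^ (ρ - 1))⁻¹) ^ ρ ≤ a ^ ρ + exp 1 := by
  have ha0 : 0 < a := by linarith
  have haρ : 0 < a ^ ρ := rpow_pos_of_pos ha0 ρ
  set s := (a ^ ρ)⁻¹
  have hs : 0 < s := inv_pos.2 haρ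
  have hs1 : s ≤ 1 := inv_le_one_of_one_le₀ (one_le_rpow ha (by linarith))
  have hsplit : a + (ρ * a ^ (ρ - 1))⁻¹ = a * (1 + s / ρ) := by
    simp only [s, rpow_sub_one ha0.ne']
    field_simp
  have hexp : exp s ≤ 1 + s * exp s := by
    have h := mul_le_mul_of_nonneg_right (add_one_le_exp (-s)) (exp_pos s).le
    rw [← exp_add, neg_add_cancel, exp_zero] at h
    linarith
  calc (a + (ρ * a ^ (ρ - 1))⁻¹) ^ ρ = a ^ ρ * (1 + s / ρ) ^ ρ := by
        rw [hsplit, mul_rpow ha0.le (by positivity)]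
    _ ≤ a ^ ρ * exp (s / ρ) ^ ρ := by
        gcongr
        linarith [add_one_le_exp (s / ρ)]
    _ ≤ a ^ ρ * (1 + s * exp s) := by
        rw [← exp_mul, div_mul_cancel₀ s (by positivity)]
        gcongr
    _ = a ^ ρ + exp s := by
        rw [mul_add, mul_one, ← mul_assoc, mul_inv_cancel₀ haρ.ne', one_mul]
    _ ≤ a ^ ρ + exp 1 := by gcongr

lemma boltzPhi_le_mul_boltz_Ioi (hρ : 1 ≤ ρ) {a : ℝ} (ha : 1 ≤ a) :
    boltzPhi ρ a ≤ ρ * exp (exp 1) * a ^ (ρ - 1) * (boltz ρ (Ioi a)).toReal := by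
  have hρ0 : 0 < ρ := by linarith
  have ha0 : 0 < a := by linarith
  -- on `[a, a + δ]` the exponent `x ^ ρ` grows by at most `e`
  set δ := (ρ * a ^ (ρ - 1))⁻¹
  have hδ : 0 < δ := by positivity
  have hshift : exp (-exp 1) * boltzPhi ρ a ≤ boltzPhi ρ (a + δ) := by
    rw [boltzPhi_eq_mul_exp (a := a) (x := a + δ) ha0.le (by positivity), mul_comm (exp _)]
    have := boltzPhi_pos hρ0 a
    gcongr
    linarith [rpow_add_inv_le hρ ha]
  have hwindow : δ * boltzPhi ρ (a + δ) ≤ (boltz ρ (Ioi a)).toReal := by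
    rw [boltz_apply_toReal hρ0 measurableSet_Ioi]
    calc δ * boltzPhi ρ (a + δ) = ∫ _ in Ioc a (a + δ), boltzPhi ρ (a + δ) := by
          simp [hδ.le]
      _ ≤ ∫ x in Ioc a (a + δ), boltzPhi ρ x :=
          setIntegral_mono_on (integrableOn_const measure_Ioc_lt_top.ne)
            (integrable_boltzPhi hρ0).integrableOn measurableSet_Ioc fun x hx ↦
              boltzPhi_antitoneOn hρ0 (mem_Ici.2 (by linarith [hx.1]))
                (mem_Ici.2 (by positivity)) hx.2
      _ ≤ ∫ x in Ioi a, boltzPhi ρ x :=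
          setIntegral_mono_set (integrable_boltzPhi hρ0).integrableOn
            (.of_forall fun x ↦ (boltzPhi_pos hρ0 x).le) Ioc_subset_Ioi_self.eventuallyLE
  calc boltzPhi ρ a = ρ * exp (exp 1) * a ^ (ρ - 1) * (δ * (exp (-exp 1) * boltzPhi ρ a)) := by
        simp only [δ, exp_neg]
        field_simp
    _ ≤ ρ * exp (exp 1) * a ^ (ρ - 1) * (boltz ρ (Ioi a)).toReal := by
        gcongr
        exact (mul_le_mul_of_nonneg_left hshift hδ.le).trans hwindow

end Tails

section Bound

variable {ρ : ℝ}

lemma exists_boltzPhi_le_of_one_le (hρ : 1 ≤ ρ) :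
    ∃ c, ∀ n : ℕ, 2 ≤ n → ∀ a, 1 ≤ a →
      (boltz ρ (Ioi a)).toReal ∈ Icc (log 2 / (2 * n)) (log 2 / n) →
      boltzPhi ρ a ≤ c * log n ^ (1 - 1 / ρ) / n := by
  have hρ0 : 0 < ρ := by linarith
  set C := 1 + |log (Gamma (1 + 1 / ρ) * log 2)| / log 2
  refine ⟨ρ * exp (exp 1) * C ^ (1 - 1 / ρ) * log 2, fun n hn a ha hT ↦ ?_⟩
  have hn2 : (2 : ℝ) ≤ n := by exact_mod_cast hn
  have ha0 : 0 < a := by linarith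
  have hexp : Gamma (1 + 1 / ρ) * log 2 / n ≤ exp (-a ^ ρ) := by
    have h := hT.1.trans (boltz_Ioi_le_boltzPhi hρ ha)
    rw [boltzPhi_of_nonneg ha0.le, le_div_iff₀ (by positivity)] at h
    calc Gamma (1 + 1 / ρ) * log 2 / n = log 2 / (2 * n) * (2 * Gamma (1 + 1 / ρ)) := by
          field_simp
      _ ≤ exp (-a ^ ρ) := h
  have haρ : a ^ ρ ≤ C * log n := le_mul_log_of_div_le_exp_neg (by positivity) hn2 hexp
  have ha' : a ^ (ρ - 1) ≤ C ^ (1 - 1 / ρ) * log n ^ (1 - 1 / ρ) := by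
    have hs : 0 ≤ 1 - 1 / ρ := sub_nonneg.2 ((div_le_one hρ0).2 hρ)
    calc a ^ (ρ - 1) = (a ^ ρ) ^ (1 - 1 / ρ) := by
          rw [← rpow_mul ha0.le]
          congr 1
          field_simp
      _ ≤ (C * log n) ^ (1 - 1 / ρ) := by gcongr
      _ = C ^ (1 - 1 / ρ) * log n ^ (1 - 1 / ρ) :=
          mul_rpow (by positivity) (log_nonneg (by linarith))
  calc boltzPhi ρ a ≤ ρ * exp (exp 1) * a ^ (ρ - 1) * (boltz ρ (Ioi a)).toReal :=
        boltzPhi_le_mul_boltz_Ioi hρ ha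
    _ ≤ ρ * exp (exp 1) * (C ^ (1 - 1 / ρ) * log n ^ (1 - 1 / ρ)) * (log 2 / n) := by
        gcongr
        exact hT.2
    _ = ρ * exp (exp 1) * C ^ (1 - 1 / ρ) * log 2 * log n ^ (1 - 1 / ρ) / n := by ring

lemma exists_boltzPhi_le_of_lt_one (hρ : 1 ≤ ρ) :
    ∃ c, ∀ n : ℕ, 2 ≤ n → ∀ a < 1, (boltz ρ (Ioi a)).toReal ≤ log 2 / n →
      boltzPhi ρ a ≤ c * log n ^ (1 - 1 / ρ) / n := by
  have hρ0 : 0 < ρ := by linarith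
  have := isProbabilityMeasure_boltz hρ0
  set τ := (boltz ρ (Ioi 1)).toReal
  have hτ : 0 < τ :=
    pos_of_mul_pos_right ((boltzPhi_pos hρ0 1).trans_le (boltzPhi_le_mul_boltz_Ioi hρ le_rfl))
      (by positivity)
  set M := (2 * Gamma (1 + 1 / ρ))⁻¹
  refine ⟨M * (log 2 / τ) / log 2 ^ (1 - 1 / ρ), fun n hn a ha hT ↦ ?_⟩
  have hn2 : (2 : ℝ) ≤ n := by exact_mod_cast hn
  have hτT : τ ≤ (boltz ρ (Ioi a)).toReal :=
    ENNReal.toReal_mono (measure_ne_top _ _) (measure_mono (Ioi_subset_Ioi ha.le))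
  have hn_le : (n : ℝ) ≤ log 2 / τ := by
    rw [le_div_iff₀ hτ, mul_comm, ← le_div_iff₀ (by positivity)]
    exact hτT.trans hT
  have hlog2 : 0 < log 2 ^ (1 - 1 / ρ) := rpow_pos_of_pos (log_pos one_lt_two) _
  calc boltzPhi ρ a ≤ M := boltzPhi_le hρ0 a
    _ ≤ M * (log 2 / τ) / n := by
        rw [mul_div_assoc]
        exact le_mul_of_one_le_right (by positivity) ((one_le_div (by positivity)).2 hn_le)
    _ = M * (log 2 / τ) / log 2 ^ (1 - 1 / ρ) * log 2 ^ (1 - 1 / ρ) / n := by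
        rw [div_mul_cancel₀ _ hlog2.ne']
    _ ≤ M * (log 2 / τ) / log 2 ^ (1 - 1 / ρ) * log n ^ (1 - 1 / ρ) / n := by
        have : 0 ≤ 1 - 1 / ρ := sub_nonneg.2 ((div_le_one hρ0).2 hρ)
        gcongr

lemma exists_boltzPhi_le_of_pow_eq_half (hρ : 1 ≤ ρ) :
    ∃ c, ∀ n : ℕ, 2 ≤ n → ∀ a, (boltz ρ (Iic a)).toReal ^ n = 1 / 2 →
      boltzPhi ρ a ≤ c * log n ^ (1 - 1 / ρ) / n := by
  have := isProbabilityMeasure_boltz (by linarith : 0 < ρ)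
  obtain ⟨c₁, hc₁⟩ := exists_boltzPhi_le_of_one_le hρ
  obtain ⟨c₂, hc₂⟩ := exists_boltzPhi_le_of_lt_one hρ
  refine ⟨max c₁ c₂, fun n hn a h ↦ ?_⟩
  have hT : (boltz ρ (Ioi a)).toReal ∈ Icc (log 2 / (2 * n)) (log 2 / n) := by
    rw [← compl_Iic, ← measureReal_def, probReal_compl_eq_one_sub measurableSet_Iic,
      measureReal_def]
    exact one_sub_mem_Icc_of_pow_eq_half (by omega) ENNReal.toReal_nonneg h
  simp only [mul_div_assoc] at hc₁ hc₂ ⊢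
  rcases le_or_gt 1 a with ha | ha
  · exact (hc₁ n hn a ha hT).trans (by gcongr; exact le_max_left _ _)
  · exact (hc₂ n hn a ha hT.2).trans (by gcongr; exact le_max_right _ _)

end Bound

theorem stmt14 (ρ : ℝ) (hρ : 1 < ρ) :
    ∃ c : ℝ, ∀ (n : ℕ), 2 ≤ n → ∀ a : ℝ,
      ((boltz ρ (Iic a)).toReal) ^ n = 1/2 →
      ∀ i : Fin n,
        geomInfl n (boltz ρ) {x : Fin n → ℝ | ∀ j, x j ≤ a} i
            = (1/2 : ℝ) ^ (((n : ℝ) - 1) / n) * boltzPhi ρ a ∧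
        geomInfl n (boltz ρ) {x : Fin n → ℝ | ∀ j, x j ≤ a} i
            ≤ c * (Real.log n) ^ (1 - 1/ρ) / n := by
  have hρ0 : 0 < ρ := by linarith
  have := isProbabilityMeasure_boltz hρ0
  obtain ⟨c, hc⟩ := exists_boltzPhi_le_of_pow_eq_half hρ.le
  refine ⟨c, fun n hn a ha i ↦ ?_⟩
  have hinfl : geomInfl n (boltz ρ) {x : Fin n → ℝ | ∀ j, x j ≤ a} i
      = (1/2 : ℝ) ^ (((n : ℝ) - 1) / n) * boltzPhi ρ a := by
    rw [geomInfl_box, mink_boltz_Iic hρ0,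
      pow_pred_eq_rpow_of_pow_eq (by omega) ENNReal.toReal_nonneg ha]
  have hn1 : (1 : ℝ) ≤ n := by exact_mod_cast (by omega : 1 ≤ n)
  refine ⟨hinfl, hinfl ▸ ?_⟩
  calc (1/2 : ℝ) ^ (((n : ℝ) - 1) / n) * boltzPhi ρ a ≤ boltzPhi ρ a :=
        mul_le_of_le_one_left (boltzPhi_pos hρ0 a).le
          (rpow_le_one (by norm_num) (by norm_num) (by positivity))
    _ ≤ c * log n ^ (1 - 1 / ρ) / n := hc n hn a ha
end
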